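/- arXiv:1208.1301 — 4 statements merged into one kernel-verified Lean document; each statement's English description precedes it below -/
import Mathlib

section
/- Let T be a complete first-order theory in a language L and suppose some formula φ(x̄,ȳ) has the order property, i.e. in some model M of T there exist tuples ā_i, b̄_i (for i < ω) such that M ⊨ φ(ā_i, b̄_j) if and only if i < j. Then for every infinite cardinal λ ≥ |L| there is a model M of T of cardinality λ such that the number of complete 1-types over M is strictly greater than λ; that is, T is unstable in every such λ. -/
/-!
Let `μ` be least with `κ < 2 ^ μ`. The binary sequences of length `μ`, ordered
lexicographically, form a linear order `K` of size `> κ` in which the `≤ κ` sequences vanishing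
beyond some index separate any two points. By compactness the order pattern of `φ` stretches
along `K`: there are tuples `āₓ, b̄ₓ` (`x ∈ K`) with `φ(āₓ, b̄_y) ↔ x < y`. By downward
Löwenheim–Skolem some `N` of size `κ` contains the `b̄_j` for `j` in the separating set, and then
the types `tp(āₓ / N)` are pairwise distinct: more than `κ` types in `n` variables over `N`.

It remains to pass from `n` variables to one. If every model of size `κ` has at most `κ` 1-types
over it, then by induction the same holds for `(k + 1)`-types: such a type over `N` is determined by
the 1-type `q` of its first coordinate together with a `k`-type over a model `N_q ≽ N` of size `κ`
in which some `a_q` realizes `q`, and there are at most `κ · κ = κ` such pairs.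
-/

open FirstOrder Cardinal

universe u

/-- A complete theory `T` has the order property if some formula `φ(x̄, ȳ)` linearly orders
an infinite set of tuples in some model of `T`: there are tuples `āᵢ`, `b̄ⱼ` (`i, j < ω`)
with `M ⊨ φ(āᵢ, b̄ⱼ)` iff `i < j`. -/
def FirstOrder.Language.Theory.HasOrderProperty {L : FirstOrder.Language.{u, u}}
    (T : L.Theory) : Prop :=
  ∃ (n m : ℕ) (φ : L.Formula (Fin n ⊕ Fin m))
    (M : FirstOrder.Language.Theory.ModelType.{u, u, u} T)
    (a : ℕ → Fin n → M) (b : ℕ → Fin m → M),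
    ∀ i j : ℕ, φ.Realize (Sum.elim (a i) (b j)) ↔ i < j

universe v w x

namespace Cardinal

theorem exists_least_lt_two_power {κ : Cardinal.{u}} (hκ : ℵ₀ ≤ κ) :
    ∃ μ, ℵ₀ ≤ μ ∧ μ ≤ κ ∧ κ < 2 ^ μ ∧ ∀ c < μ, 2 ^ c ≤ κ := by
  have hne : {c : Cardinal.{u} | κ < 2 ^ c}.Nonempty := ⟨κ, cantor κ⟩
  set μ := sInf {c : Cardinal.{u} | κ < 2 ^ c}
  have hμ : κ < 2 ^ μ := csInf_mem hne
  refine ⟨μ, ?_, csInf_le' (cantor κ), hμ, fun c hc => le_of_not_gt fun h =>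
    hc.not_ge (csInf_le' (show c ∈ {c | κ < 2 ^ c} from h))⟩
  by_contra! h
  exact hμ.not_ge ((power_lt_aleph0 (natCast_lt_aleph0 (n := 2)) h).le.trans hκ)

end Cardinal

section EventuallyFalse

variable {β : Type u} [LinearOrder β]

theorem card_setOf_false_of_lt_le (i : β) :
    #{g : β → Bool | ∀ k, i < k → g k = false} ≤ 2 ^ #(Set.Iic i) := by
  have hinj : Function.Injective fun g : {g : β → Bool | ∀ k, i < k → g k = false} =>
      fun k : Set.Iic i => g.1 k := by
    rintro ⟨g, hg⟩ ⟨g', hg'⟩ h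
    refine Subtype.ext (funext fun k => ?_)
    rcases le_or_gt k i with hk | hk
    · exact congrFun h ⟨k, hk⟩
    · exact (hg k hk).trans (hg' k hk).symm
  simpa using mk_le_of_injective hinj

theorem card_setOf_eventually_false_le {κ : Cardinal.{u}} (hκ : ℵ₀ ≤ κ) (hβ : #β ≤ κ)
    (h : ∀ i : β, 2 ^ #(Set.Iic i) ≤ κ) :
    #{g : β → Bool | ∃ i, ∀ k, i < k → g k = false} ≤ κ := by
  have hunion : {g : β → Bool | ∃ i, ∀ k, i < k → g k = false} =
      ⋃ i, {g : β → Bool | ∀ k, i < k → g k = false} := by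
    ext g; simp
  calc _ ≤ sum fun i : β => #{g : β → Bool | ∀ k, i < k → g k = false} :=
        hunion ▸ mk_iUnion_le_sum_mk
    _ ≤ sum fun _ : β => κ := sum_le_sum _ _ fun i => (card_setOf_false_of_lt_le i).trans (h i)
    _ ≤ κ * κ := by simpa using mul_le_mul_left hβ κ
    _ = κ := mul_eq_self hκ

theorem exists_eventually_false_mem_Ioc [WellFoundedLT β] {x y : Lex (β → Bool)} (hxy : x < y) :
    ∃ j : Lex (β → Bool), (∃ i, ∀ k, i < k → ofLex j k = false) ∧ j ∈ Set.Ioc x y := by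
  obtain ⟨i, hagree, hi⟩ := hxy
  obtain ⟨hxi, hyi⟩ := Bool.lt_iff.1 hi
  refine ⟨toLex fun k => if k ≤ i then ofLex y k else false,
    ⟨i, fun k hk => if_neg hk.not_ge⟩, ⟨i, fun k hk => ?_, ?_⟩, Pi.toLex_monotone fun k => ?_⟩
  · simp [hagree k hk, hk.le]
  · simp [hxi, hyi]
  · split_ifs
    · exact le_rfl
    · exact Bool.false_le _

end EventuallyFalse

theorem exists_linearOrder_small_subset_meets_Ioc {κ : Cardinal.{u}} (hκ : ℵ₀ ≤ κ) :
    ∃ (K : Type u) (_ : LinearOrder K) (J : Set K),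
      #J ≤ κ ∧ κ < #K ∧ ∀ x y : K, x < y → (J ∩ Set.Ioc x y).Nonempty := by
  obtain ⟨μ, hμ, hμκ, hκμ, hmin⟩ := exists_least_lt_two_power hκ
  have hIic : ∀ i : μ.ord.ToType, #(Set.Iic i) < μ := fun i => by
    rw [← Set.Iio_insert]
    exact mk_insert_le.trans_lt
      (add_lt_of_lt hμ (by simpa using mk_Iio_lt i (by simp)) (one_lt_aleph0.trans_le hμ))
  refine ⟨Lex (μ.ord.ToType → Bool), inferInstance,
    {j | ∃ i, ∀ k, i < k → ofLex j k = false}, ?_, ?_, fun x y hxy => ?_⟩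
  · exact card_setOf_eventually_false_le hκ (by simpa using hμκ) fun i => hmin _ (hIic i)
  · simpa [Lex] using hκμ
  · exact exists_eventually_false_mem_Ioc hxy

theorem Finset.strictMonoOn_card_filter_lt {K : Type*} [LinearOrder K] (s : Finset K) :
    StrictMonoOn (fun x => (s.filter (· < x)).card) s := fun x hx _ _ hxy =>
  Finset.card_lt_card ⟨Finset.monotone_filter_right s fun _ _ h => h.trans hxy,
    fun h => lt_irrefl x (Finset.mem_filter.1 (h (Finset.mem_filter.2 ⟨hx, hxy⟩))).2⟩

namespace FirstOrder.Language

variable {L : FirstOrder.Language.{u, v}}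

theorem Theory.exists_completeType_of_finitely_realized {T : L.Theory} {α : Type w} {ι : Type x}
    (f : ι → L.Formula α) (M : Type*) [L.Structure M] [Nonempty M] [M ⊨ T]
    (h : ∀ s : Finset ι, ∃ v : α → M, ∀ i ∈ s, (f i).Realize v) :
    ∃ p : T.CompleteType α, ∀ i, Formula.equivSentence (f i) ∈ p := by
  obtain ⟨p, -, hp⟩ := isCompact_univ.inter_iInter_nonempty
    (fun i => T.typesWith (Formula.equivSentence (f i)))
    (fun i => CompleteType.isClosed_typesWith _)
    fun s => by
      obtain ⟨v, hv⟩ := h s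
      exact ⟨T.typeOf v, trivial, Set.mem_iInter₂.2 fun i hi =>
        Theory.CompleteType.formula_mem_typeOf.2 (hv i hi)⟩
  exact ⟨p, Set.mem_iInter.1 hp⟩

/-- `φ (x̄ᵢ, ȳⱼ)`, for the variable tuples `x̄ᵢ = ((i, k))ₖ` and `ȳⱼ = ((j, r))ᵣ`. -/
def orderPatternFormula {n m : ℕ} (φ : L.Formula (Fin n ⊕ Fin m)) {K : Type x} (i j : K) :
    L.Formula ((K × Fin n) ⊕ (K × Fin m)) :=
  φ.relabel (Sum.map (fun k => (i, k)) (fun r => (j, r)))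

@[simp]
theorem realize_orderPatternFormula {n m : ℕ} {φ : L.Formula (Fin n ⊕ Fin m)} {K : Type x}
    {P : Type w} [L.Structure P] {v : (K × Fin n) ⊕ (K × Fin m) → P} {i j : K} :
    (orderPatternFormula φ i j).Realize v ↔
      φ.Realize (Sum.elim (fun k => v (Sum.inl (i, k))) fun r => v (Sum.inr (j, r))) := by
  rw [orderPatternFormula, Formula.realize_relabel, ← Sum.elim_comp_inl_inr v, Sum.elim_comp_map]
  rfl

theorem exists_modelType_orderPattern {T : L.Theory} {n m : ℕ} (φ : L.Formula (Fin n ⊕ Fin m))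
    (M₀ : Type w) [L.Structure M₀] [Nonempty M₀] [M₀ ⊨ T]
    (a : ℕ → Fin n → M₀) (b : ℕ → Fin m → M₀)
    (hab : ∀ i j, φ.Realize (Sum.elim (a i) (b j)) ↔ i < j) (K : Type x) [LinearOrder K] :
    ∃ (M : Theory.ModelType.{u, v, max u v x} T) (A : K → Fin n → M) (B : K → Fin m → M),
      ∀ i j, φ.Realize (Sum.elim (A i) (B j)) ↔ i < j := by
  classical
  let f : K × K → L.Formula ((K × Fin n) ⊕ (K × Fin m)) := fun p =>
    if p.1 < p.2 then orderPatternFormula φ p.1 p.2 else (orderPatternFormula φ p.1 p.2).not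
  obtain ⟨p, hp⟩ := T.exists_completeType_of_finitely_realized f M₀ fun s => by
    let t := s.image Prod.fst ∪ s.image Prod.snd
    have ht := Finset.strictMonoOn_card_filter_lt t
    refine ⟨Sum.elim (fun x => a (t.filter (· < x.1)).card x.2)
      (fun y => b (t.filter (· < y.1)).card y.2), fun ij hij => ?_⟩
    have hi : ij.1 ∈ t := Finset.mem_union_left _ (Finset.mem_image_of_mem _ hij)
    have hj : ij.2 ∈ t := Finset.mem_union_right _ (Finset.mem_image_of_mem _ hij)
    by_cases h : ij.1 < ij.2 <;> simp [f, h, hab, ht.lt_iff_lt hi hj]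
  obtain ⟨M, v, rfl⟩ := T.exists_modelType_is_realized_in p
  refine ⟨M, fun i k => v (Sum.inl (i, k)), fun j r => v (Sum.inr (j, r)), fun i j => ?_⟩
  have hv := Theory.CompleteType.formula_mem_typeOf.1 (hp (i, j))
  by_cases h : i < j <;> simpa [f, h] using hv

theorem ElementaryEmbedding.model_elementaryDiagram {N M : Type*} [L.Structure N] [L.Structure M]
    (f : N ↪ₑ[L] M) :
    letI := constantsOn.structure f
    M ⊨ L.elementaryDiagram N := by
  let _ := constantsOn.structure f
  refine ⟨fun σ hσ => ?_⟩
  have hN : (Formula.equivSentence.symm σ).Realize fun a : N => (L.con a : N) :=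
    (Formula.realize_equivSentence_symm_con N σ).2 (mem_completeTheory.1 hσ)
  exact (Formula.realize_equivSentence_symm_con M σ).1 ((f.map_formula _ _).2 hN)

theorem Theory.typeOf_comp_elementaryEmbedding {T : L.Theory}
    {α : Type w} {M M' : Type*} [L.Structure M] [L.Structure M'] [Nonempty M] [Nonempty M']
    [M ⊨ T] [M' ⊨ T] (f : M ↪ₑ[L] M') (v : α → M) : T.typeOf (f ∘ v) = T.typeOf v :=
  SetLike.ext fun σ => by simp only [Theory.CompleteType.mem_typeOf, f.map_formula]

theorem Theory.exists_modelType_card_eq_typeOf_eq {L : FirstOrder.Language.{u, u}}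
    {T : L.Theory} {κ : Cardinal.{u}} (hκ : ℵ₀ ≤ κ) (hL : L.card ≤ κ)
    (hT : ∀ M : T.ModelType.{u, u, u}, κ ≤ #M) {α : Type} [Finite α] (p : T.CompleteType α) :
    ∃ (M : T.ModelType.{u, u, u}) (v : α → M), #M = κ ∧ T.typeOf v = p := by
  obtain ⟨M, v, rfl⟩ := T.exists_modelType_is_realized_in p
  obtain ⟨S, hvS, hS⟩ := exists_elementarySubstructure_card_eq L (Set.range v) κ hκ
    (by simpa using (Set.finite_range v).lt_aleph0.le.trans hκ) (by simpa using hL)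
    (by simpa using hT M)
  replace hS : #S = κ := by simpa using hS
  let v' : α → S := fun i => ⟨v i, hvS ⟨i, rfl⟩⟩
  exact ⟨S.toModel T, v', hS, (T.typeOf_comp_elementaryEmbedding S.subtype v').symm⟩

section Parameters

variable {N : Type w} {α : Type x}

/-- A formula with parameters from `N`, as a sentence of `L[[N]][[α]]`: the form in which it
belongs to a type over `N`. -/
noncomputable def Formula.paramSentence (χ : L.Formula (N ⊕ α)) : L[[N]][[α]].Sentence :=
  Formula.equivSentence (BoundedFormula.constantsVarsEquiv.symm χ)

theorem Formula.paramSentence_surjective :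
    Function.Surjective (Formula.paramSentence : L.Formula (N ⊕ α) → L[[N]][[α]].Sentence) :=
  fun σ => ⟨BoundedFormula.constantsVarsEquiv (Formula.equivSentence.symm σ), by
    simp [Formula.paramSentence]⟩

theorem Formula.realize_constantsVarsEquiv_symm {M : Type*} [L.Structure M] [L[[N]].Structure M]
    [(L.lhomWithConstants N).IsExpansionOn M] (χ : L.Formula (N ⊕ α)) (v : α → M) :
    Formula.Realize (BoundedFormula.constantsVarsEquiv.symm χ : L[[N]].Formula α) v ↔
      χ.Realize (Sum.elim (fun a => (L.con a : M)) v) := by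
  rw [Formula.Realize, Formula.Realize, ← BoundedFormula.realize_constantsVarsEquiv,
    _root_.Equiv.apply_symm_apply]

theorem Formula.paramSentence_mem_typeOf {T : L[[N]].Theory} {M : Type*} [L.Structure M]
    [L[[N]].Structure M] [(L.lhomWithConstants N).IsExpansionOn M] [Nonempty M] [M ⊨ T]
    {v : α → M} {χ : L.Formula (N ⊕ α)} :
    χ.paramSentence ∈ T.typeOf v ↔ χ.Realize (Sum.elim (fun a => (L.con a : M)) v) := by
  rw [Formula.paramSentence, Theory.CompleteType.formula_mem_typeOf,
    Formula.realize_constantsVarsEquiv_symm]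

theorem Theory.CompleteType.eq_of_forall_paramSentence_mem_iff {T : L[[N]].Theory}
    {p q : T.CompleteType α}
    (h : ∀ χ : L.Formula (N ⊕ α), χ.paramSentence ∈ p ↔ χ.paramSentence ∈ q) : p = q :=
  SetLike.ext fun σ => by
    obtain ⟨χ, rfl⟩ := Formula.paramSentence_surjective σ
    exact h χ

end Parameters

theorem injective_typeOf_of_separated {N : Type w} {T : L[[N]].Theory} {M : Type*} [L.Structure M]
    [L[[N]].Structure M] [(L.lhomWithConstants N).IsExpansionOn M] [Nonempty M] [M ⊨ T]
    {n : ℕ} {K : Type*} [LinearOrder K] {J : Set K}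
    (hJ : ∀ x y : K, x < y → (J ∩ Set.Ioc x y).Nonempty) (A : K → Fin n → M)
    (ψ : J → L.Formula (N ⊕ Fin n))
    (hψ : ∀ x (j : J), (ψ j).Realize (Sum.elim (fun a => (L.con a : M)) (A x)) ↔ x < j) :
    Function.Injective fun x => T.typeOf (A x) := by
  refine Function.Injective.of_lt_imp_ne fun x y hxy h => ?_
  obtain ⟨j, hjJ, hxj, hjy⟩ := hJ x y hxy
  have hmem := congrArg ((ψ ⟨j, hjJ⟩).paramSentence ∈ ·) h
  simp only [Formula.paramSentence_mem_typeOf, hψ, eq_iff_iff] at hmem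
  exact hjy.not_gt (hmem.1 hxj)

theorem exists_modelType_card_eq_lt_card_completeType {L : FirstOrder.Language.{u, u}}
    {T : L.Theory} {n m : ℕ} (φ : L.Formula (Fin n ⊕ Fin m))
    (M₀ : Theory.ModelType.{u, u, w} T)
    (a : ℕ → Fin n → M₀) (b : ℕ → Fin m → M₀)
    (hab : ∀ i j, φ.Realize (Sum.elim (a i) (b j)) ↔ i < j)
    {κ : Cardinal.{u}} (hκ : ℵ₀ ≤ κ) (hL : L.card ≤ κ) :
    ∃ N : T.ModelType.{u, u, u}, #N = κ ∧ κ < #((L.elementaryDiagram N).CompleteType (Fin n)) := by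
  obtain ⟨K, _, J, hJκ, hκK, hJ⟩ := exists_linearOrder_small_subset_meets_Ioc hκ
  obtain ⟨M, A, B, hAB⟩ := exists_modelType_orderPattern (T := T) φ M₀ a b hab K
  have hA : Function.Injective A := Function.Injective.of_lt_imp_ne fun x y hxy h =>
    lt_irrefl y ((hAB y y).1 (h ▸ (hAB x y).2 hxy))
  have hκM : κ < #M := (lt_max_iff.1 (hκK.trans_le ((mk_le_of_injective
    (List.ofFn_injective.comp hA)).trans (mk_list_le_max M)))).resolve_left hκ.not_gt
  have hBκ : #(Set.range fun p : J × Fin m => B p.1 p.2) ≤ κ := mk_range_le.trans <| by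
    simpa [mul_eq_self hκ] using mul_le_mul' hJκ ((natCast_lt_aleph0 (n := m)).le.trans hκ)
  obtain ⟨S, hBS, hS⟩ := exists_elementarySubstructure_card_eq L (M := M) _ κ hκ
    (by simpa using hBκ) (by simpa using hL) (by simpa using hκM.le)
  replace hS : #S = κ := by simpa using hS
  have : Nonempty S := mk_ne_zero_iff.1 (hS ▸ (aleph0_pos.trans_le hκ).ne')
  let _ := constantsOn.structure S.subtype
  have := S.subtype.model_elementaryDiagram
  let ψ : J → L.Formula (S ⊕ Fin n) := fun j =>
    φ.relabel (Sum.elim Sum.inr fun r => Sum.inl ⟨B j r, hBS ⟨(j, r), rfl⟩⟩)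
  refine ⟨Theory.ModelType.of T S, hS, ?_⟩
  change κ < #((L.elementaryDiagram S).CompleteType (Fin n))
  refine hκK.trans_le (mk_le_of_injective (injective_typeOf_of_separated hJ A ψ fun x j => ?_))
  rw [Formula.realize_relabel, ← hAB]
  exact iff_of_eq (congrArg _ (funext fun y => by rcases y with k | r <;> rfl))

section Extension

variable {N : Type w} {T : L[[N]].Theory}
  {M : Type*} [L.Structure M] [L[[N]].Structure M] [(L.lhomWithConstants N).IsExpansionOn M]
  [Nonempty M] [M ⊨ T]
  {M' : Type*} [L.Structure M'] [L[[N]].Structure M'] [(L.lhomWithConstants N).IsExpansionOn M']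
  [Nonempty M'] [M' ⊨ T]
  {k : ℕ} {v : Fin (k + 1) → M} {a : M'}

theorem exists_realize_cons_of_typeOf_eq
    (h : T.typeOf (fun _ : Fin 1 => v 0) = T.typeOf fun _ : Fin 1 => a)
    {χ : L.Formula (N ⊕ Fin (k + 1))} (hχ : χ.Realize (Sum.elim (fun c => (L.con c : M)) v)) :
    ∃ u : Fin k → M', χ.Realize (Sum.elim (fun c => (L.con c : M')) (Fin.cons a u)) := by
  let θ : L.Formula (N ⊕ Fin 1) :=
    (χ.relabel (Sum.elim (Sum.inl ∘ Sum.inl) (Fin.cons (Sum.inl (Sum.inr 0)) Sum.inr))).iExs (Fin k)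
  have hθ : θ.Realize (Sum.elim (fun c => (L.con c : M)) fun _ => v 0) := by
    refine Formula.realize_iExs.2 ⟨Fin.tail v, ?_⟩
    rw [Formula.realize_relabel, Sum.comp_elim, Fin.comp_cons]
    rwa [← Fin.cons_self_tail v] at hχ
  rw [← Formula.paramSentence_mem_typeOf (T := T), h, Formula.paramSentence_mem_typeOf,
    Formula.realize_iExs] at hθ
  obtain ⟨u, hu⟩ := hθ
  rw [Formula.realize_relabel, Sum.comp_elim, Fin.comp_cons] at hu
  exact ⟨u, hu⟩

theorem exists_completeType_realize_iff
    (h : T.typeOf (fun _ : Fin 1 => v 0) = T.typeOf fun _ : Fin 1 => a) :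
    ∃ r : (L.elementaryDiagram M').CompleteType (Fin k), ∀ χ : L.Formula (N ⊕ Fin (k + 1)),
      χ.Realize (Sum.elim (fun c => (L.con c : M)) v) ↔
        (χ.relabel (Sum.elim (fun c => Sum.inl (L.con c : M')) (Fin.cons (Sum.inl a) Sum.inr))
          ).paramSentence ∈ r := by
  set ρ : N ⊕ Fin (k + 1) → M' ⊕ Fin k :=
    Sum.elim (fun c => Sum.inl (L.con c : M')) (Fin.cons (Sum.inl a) Sum.inr)
  have hρ (χ : L.Formula (N ⊕ Fin (k + 1))) (u : Fin k → M') :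
      Formula.Realize (BoundedFormula.constantsVarsEquiv.symm (χ.relabel ρ) : L[[M']].Formula _) u ↔
        χ.Realize (Sum.elim (fun c => (L.con c : M')) (Fin.cons a u)) := by
    rw [Formula.realize_constantsVarsEquiv_symm, Formula.realize_relabel, Sum.comp_elim,
      Fin.comp_cons]
    rfl
  obtain ⟨r, hr⟩ := Theory.exists_completeType_of_finitely_realized (T := L.elementaryDiagram M')
    (fun χ : {χ : L.Formula (N ⊕ Fin (k + 1)) // χ.Realize (Sum.elim (fun c => (L.con c : M)) v)} =>
      (BoundedFormula.constantsVarsEquiv.symm (χ.1.relabel ρ) : L[[M']].Formula _)) M' fun s => by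
    obtain ⟨u, hu⟩ := exists_realize_cons_of_typeOf_eq h (χ := Formula.iInf fun χ : s => χ.1.1)
      (Formula.realize_iInf.2 fun χ => χ.1.2)
    exact ⟨u, fun χ hχ => (hρ _ u).2 (Formula.realize_iInf.1 hu ⟨χ, hχ⟩)⟩
  refine ⟨r, fun χ => ⟨fun hχ => hr ⟨χ, hχ⟩, fun hχ => by_contra fun hn => ?_⟩⟩
  exact (r.not_mem_iff _).1 (hr ⟨χ.not, hn⟩) hχ

end Extension

theorem card_completeType_succ_le_mul {L : FirstOrder.Language.{u, u}} {T : L.Theory}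
    {κ : Cardinal.{u}} (hκ : ℵ₀ ≤ κ) (hL : L.card ≤ κ) {k : ℕ}
    (hk : ∀ M : T.ModelType.{u, u, u}, #M = κ →
      #((L.elementaryDiagram M).CompleteType (Fin k)) ≤ κ)
    (N : T.ModelType.{u, u, u}) (hN : #N = κ) :
    #((L.elementaryDiagram N).CompleteType (Fin (k + 1))) ≤
      #((L.elementaryDiagram N).CompleteType (Fin 1)) * κ := by
  set D := L.elementaryDiagram N
  let _ (M : D.ModelType) : L.Structure M := (L.lhomWithConstants N).reduct M
  have _ (M : D.ModelType) : (L.lhomWithConstants N).IsExpansionOn M :=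
    LHom.isExpansionOn_reduct _ _
  have _ (M : D.ModelType) : M ⊨ T :=
    ((ElementaryEmbedding.ofModelsElementaryDiagram L N M).theory_model_iff T).1 inferInstance
  have hL' : L[[N]].card ≤ κ := by
    simpa [card_withConstants, hN, add_eq_self hκ] using add_le_add hL (le_refl κ)
  choose P a hP hPa using fun q : D.CompleteType (Fin 1) =>
    D.exists_modelType_card_eq_typeOf_eq hκ hL'
      (fun M => hN ▸ mk_le_of_injective
        (ElementaryEmbedding.ofModelsElementaryDiagram L N M).injective) q
  replace hPa (q) : D.typeOf (fun _ : Fin 1 => a q 0) = q :=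
    (congrArg D.typeOf (funext fun i => by rw [Subsingleton.elim i 0])).trans (hPa q)
  choose Mp vp hvp using fun p : D.CompleteType (Fin (k + 1)) =>
    D.exists_modelType_is_realized_in p
  refine mk_le_mk_mul_of_mk_preimage_le (fun p => D.typeOf fun _ : Fin 1 => vp p 0) fun q => ?_
  have hfib : ∀ p ∈ (fun p => D.typeOf fun _ : Fin 1 => vp p 0) ⁻¹' {q},
      ∃ r : (L.elementaryDiagram (P q)).CompleteType (Fin k), ∀ χ : L.Formula (N ⊕ Fin (k + 1)),
        χ.paramSentence ∈ p ↔ (χ.relabel (Sum.elim (fun c => Sum.inl (L.con c : P q))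
          (Fin.cons (Sum.inl (a q 0)) Sum.inr))).paramSentence ∈ r := by
    intro p hp
    obtain ⟨r, hr⟩ := exists_completeType_realize_iff (v := vp p) (hp.trans (hPa q).symm)
    exact ⟨r, fun χ => by rw [← hvp p, Formula.paramSentence_mem_typeOf, hr]⟩
  choose r hr using hfib
  calc _ ≤ #((L.elementaryDiagram (P q)).CompleteType (Fin k)) :=
        mk_le_of_injective (f := fun p => r p.1 p.2) fun p p' h => Subtype.ext <|
          Theory.CompleteType.eq_of_forall_paramSentence_mem_iff fun χ => by
            rw [hr _ p.2, hr _ p'.2, show r _ p.2 = r _ p'.2 from h]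
    _ ≤ κ := hk (Theory.ModelType.of T (P q)) (hP q)

theorem card_completeType_le_of_card_completeType_one_le {L : FirstOrder.Language.{u, u}}
    {T : L.Theory} {κ : Cardinal.{u}} (hκ : ℵ₀ ≤ κ) (hL : L.card ≤ κ)
    (h1 : ∀ M : T.ModelType.{u, u, u}, #M = κ →
      #((L.elementaryDiagram M).CompleteType (Fin 1)) ≤ κ) (k : ℕ) :
    ∀ M : T.ModelType.{u, u, u}, #M = κ →
      #((L.elementaryDiagram M).CompleteType (Fin (k + 1))) ≤ κ := by
  induction k with
  | zero => exact h1
  | succ k ih =>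
    intro M hM
    calc _ ≤ _ * κ := card_completeType_succ_le_mul hκ hL ih M hM
      _ ≤ κ * κ := mul_le_mul' (h1 M hM) le_rfl
      _ = κ := mul_eq_self hκ

end FirstOrder.Language

theorem unstable_in_every_cardinal_of_orderProperty_general {L : FirstOrder.Language.{u, u}}
    (T : L.Theory) (hop : T.HasOrderProperty) :
    ∀ lam : Cardinal.{u}, ℵ₀ ≤ lam → L.card ≤ lam →
      ∃ M : FirstOrder.Language.Theory.ModelType.{u, u, u} T, #M = lam ∧
        lam < #((L.elementaryDiagram M).CompleteType (Fin 1)) := by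
  intro lam hlam hL
  obtain ⟨n, m, φ, M₀, a, b, hab⟩ := hop
  obtain ⟨N, hN, hmany⟩ :=
    Language.exists_modelType_card_eq_lt_card_completeType φ M₀ a b hab hlam hL
  by_contra! hstable
  obtain _ | k := n
  · exact lt_irrefl 1 ((hab 1 1).1 (Subsingleton.elim (a 0) (a 1) ▸ (hab 0 1).2 one_pos))
  · exact hmany.not_ge
      (Language.card_completeType_le_of_card_completeType_one_le hlam hL hstable k N hN)

/-- If some formula has the order property, then for every infinite cardinal `λ ≥ |L|`
there is a model `M` of `T` of cardinality `λ` over which there are more than `λ`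
complete 1-types; i.e. `T` is unstable in every such cardinal. -/
theorem unstable_in_every_cardinal_of_orderProperty {L : FirstOrder.Language.{u, u}}
    (T : L.Theory) (hT : T.IsComplete) (hop : T.HasOrderProperty) :
    ∀ lam : Cardinal.{u}, ℵ₀ ≤ lam → L.card ≤ lam →
      ∃ M : FirstOrder.Language.Theory.ModelType.{u, u, u} T, #M = lam ∧
        lam < #((L.elementaryDiagram M).CompleteType (Fin 1)) :=
  unstable_in_every_cardinal_of_orderProperty_general T hop
end

section
/- Let T be a complete first-order theory in a language L such that no formula φ(x̄,ȳ) has the order property (T is stable). Then for every infinite cardinal λ satisfying λ = λ^{max(|L|,ℵ₀)} and every model M of T of cardinality at most λ, the number of complete 1-types over M is at most λ. -/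
/-!
For a formula `φ(x, y)` and a complete type `p` over `M`, let `S ⊆ Mᵐ` be the set of parameters
`b` with `φ(x, b) ∈ p`. As `p` is finitely satisfiable in `M`, every finite part of `S` is cut out
by `φ(a, ·)` for some `a ∈ M`. Stability forces `S` to be determined by the `φ`-profile of `b` over
a finite set `s ⊆ M`: otherwise one builds `aₙ ∈ M` and pairs `bₙ ∈ S`, `b'ₙ ∉ S` that no earlier
`aᵢ` separates, with `aₙ` realizing `S` on all earlier pairs, and Ramsey's theorem for the
colouring `φ(aᵢ, bⱼ)`, `i < j`, yields a ladder for `φ` or for `¬φ`. So `S` is coded by `s` and a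
finite set of profiles, and `p` by these codes for the `max(|L|, ℵ₀)` formulas `φ`: there are at
most `λ ^ max(|L|, ℵ₀) = λ` types.
-/

open FirstOrder Cardinal

universe u

open Filter

theorem exists_strictMono_of_mem_hyperfilter {r : ℕ → ℕ → Prop}
    (hr : {i | {j | r i j} ∈ hyperfilter ℕ} ∈ hyperfilter ℕ) :
    ∃ g : ℕ → ℕ, StrictMono g ∧ ∀ i j, i < j → r (g i) (g j) := by
  have hIoi : ∀ i, Set.Ioi i ∈ hyperfilter ℕ := fun i => hyperfilter_le_cofinite (by simp)
  obtain ⟨g, -, hg⟩ := exists_seq_of_forall_finset_exists (· ∈ {i | {j | r i j} ∈ hyperfilter ℕ})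
    (fun i j => i < j ∧ r i j) fun s hs => by
      obtain ⟨j, hjR, hj⟩ := Ultrafilter.nonempty_of_mem <| inter_mem hr <|
        (biInter_finset_mem s).2 fun i hi => inter_mem (hIoi i) (hs i hi)
      exact ⟨j, hjR, fun i hi => by simpa using Set.mem_iInter₂.1 hj i hi⟩
  exact ⟨g, fun i j hij => (hg i j hij).1, fun i j hij => (hg i j hij).2⟩

/-- Ramsey's theorem for pairs in two colours. -/
theorem exists_strictMono_forall_or_forall_not (r : ℕ → ℕ → Prop) :
    ∃ g : ℕ → ℕ, StrictMono g ∧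
      ((∀ i j, i < j → r (g i) (g j)) ∨ ∀ i j, i < j → ¬ r (g i) (g j)) := by
  by_cases hr : {i | {j | r i j} ∈ hyperfilter ℕ} ∈ hyperfilter ℕ
  · obtain ⟨g, hg, h⟩ := exists_strictMono_of_mem_hyperfilter hr
    exact ⟨g, hg, Or.inl h⟩
  · have hnr : {i | {j | ¬ r i j} ∈ hyperfilter ℕ} ∈ hyperfilter ℕ := by
      simpa [← Set.compl_ofPred, Ultrafilter.compl_mem_iff_notMem] using hr
    obtain ⟨g, hg, h⟩ := exists_strictMono_of_mem_hyperfilter hnr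
    exact ⟨g, hg, Or.inr h⟩

section Ladder

variable {A B : Type*}

def HasLadder (D : A → B → Prop) : Prop :=
  ∃ (a : ℕ → A) (b : ℕ → B), ∀ i j, D (a i) (b j) ↔ i < j

variable {D : A → B → Prop}

theorem hasLadder_or_hasLadder_not_of_triangle {a : ℕ → A} {b b' : ℕ → B}
    (hdiag : ∀ i j, j ≤ i → D (a i) (b j) ∧ ¬ D (a i) (b' j))
    (hagree : ∀ i j, i < j → (D (a i) (b j) ↔ D (a i) (b' j))) :
    HasLadder D ∨ HasLadder fun x y => ¬ D x y := by
  obtain ⟨g, hg, hpos | hneg⟩ := exists_strictMono_forall_or_forall_not fun i j => D (a i) (b j)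
  · refine Or.inl ⟨a ∘ g, b' ∘ g, fun i j => ⟨fun hD => ?_, fun hij => ?_⟩⟩
    · by_contra hij
      exact (hdiag _ _ (hg.monotone (not_lt.1 hij))).2 hD
    · exact (hagree _ _ (hg hij)).1 (hpos i j hij)
  · refine Or.inr ⟨a ∘ g, b ∘ g, fun i j => ⟨fun hD => ?_, hneg i j⟩⟩
    by_contra hij
    exact hD (hdiag _ _ (hg.monotone (not_lt.1 hij))).1

theorem exists_finset_determines_of_not_hasLadder {S : Set B}
    (hS : ∀ C : Finset B, ∃ a, ∀ b ∈ C, D a b ↔ b ∈ S)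
    (hD : ¬ HasLadder D) (hnD : ¬ HasLadder fun x y => ¬ D x y) :
    ∃ s : Finset A, ∀ b b', (∀ a ∈ s, D a b ↔ D a b') → b ∈ S → b' ∈ S := by
  classical
  by_contra! h
  -- `f n = (aₙ, bₙ, b'ₙ)`
  obtain ⟨f, hP, hr⟩ := exists_seq_of_forall_finset_exists
    (fun t : A × B × B => t.2.1 ∈ S ∧ t.2.2 ∉ S ∧ D t.1 t.2.1 ∧ ¬ D t.1 t.2.2)
    (fun s t => (D s.1 t.2.1 ↔ D s.1 t.2.2) ∧ D t.1 s.2.1 ∧ ¬ D t.1 s.2.2) fun s hs => by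
      obtain ⟨b, b', hbb', hb, hb'⟩ := h (s.image Prod.fst)
      obtain ⟨a, ha⟩ := hS ({b, b'} ∪ s.image (·.2.1) ∪ s.image (·.2.2))
      refine ⟨(a, b, b'),
        ⟨hb, hb', (ha b (by simp)).2 hb, fun hab' => hb' ((ha b' (by simp)).1 hab')⟩,
        fun t ht => ⟨hbb' t.1 (Finset.mem_image_of_mem _ ht), ?_, fun hat => ?_⟩⟩
      · exact (ha _ (by simp [Finset.mem_image_of_mem _ ht])).2 (hs t ht).1
      · exact (hs t ht).2.1 ((ha _ (by simp [Finset.mem_image_of_mem _ ht])).1 hat)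
  refine (hasLadder_or_hasLadder_not_of_triangle (a := fun n => (f n).1) (b := fun n => (f n).2.1)
    (b' := fun n => (f n).2.2) (fun i j hji => ?_) fun i j hij => (hr i j hij).1).elim hD hnD
  rcases hji.eq_or_lt with rfl | hji
  · exact (hP j).2.2
  · exact (hr j i hji).2

open Classical in
theorem exists_finset_profile_of_not_hasLadder {S : Set B}
    (hS : ∀ C : Finset B, ∃ a, ∀ b ∈ C, D a b ↔ b ∈ S)
    (hD : ¬ HasLadder D) (hnD : ¬ HasLadder fun x y => ¬ D x y) :
    ∃ (s : Finset A) (Q : Finset (Finset A)), S = {b | {a ∈ s | D a b} ∈ Q} := by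
  obtain ⟨s, hs⟩ := exists_finset_determines_of_not_hasLadder hS hD hnD
  refine ⟨s, s.powerset.filter fun t => ∃ b ∈ S, {a ∈ s | D a b} = t, Set.ext fun b => ?_⟩
  simp only [Set.mem_ofPred_eq, Finset.mem_filter, Finset.mem_powerset]
  refine ⟨fun hb => ⟨Finset.filter_subset _ _, b, hb, rfl⟩, fun ⟨_, b', hb', heq⟩ => ?_⟩
  refine hs b' b (fun a ha => ?_) hb'
  simpa [ha] using Finset.ext_iff.1 heq a

end Ladder

namespace FirstOrder.Language

variable {L : Language.{u, v}} {M : Type w} {α : Type*} {m : ℕ}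

noncomputable def Formula.withParams (φ : L.Formula (α ⊕ Fin m)) (b : Fin m → M) :
    L[[M]].Formula α :=
  BoundedFormula.constantsVarsEquiv.symm (φ.relabel (Sum.elim Sum.inr (Sum.inl ∘ b)))

section Expansion

variable {N : Type*} [L.Structure N] [L[[M]].Structure N] [(L.lhomWithConstants M).IsExpansionOn N]

theorem Formula.realize_withParams (φ : L.Formula (α ⊕ Fin m)) (b : Fin m → M) (v : α → N) :
    (φ.withParams b).Realize v ↔ φ.Realize (Sum.elim v fun j => (L.con (b j) : N)) := by
  rw [Formula.withParams, Formula.Realize, ← BoundedFormula.realize_constantsVarsEquiv,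
    _root_.Equiv.apply_symm_apply, ← Formula.Realize, Formula.realize_relabel]
  congr! 1
  ext (i | j) <;> rfl

end Expansion

theorem Formula.exists_withParams_iff (θ : L[[M]].Formula α) :
    ∃ (m : ℕ) (φ : L.Formula (α ⊕ Fin m)) (b : Fin m → M),
      ∀ {N : Type w'} [L.Structure N] [L[[M]].Structure N]
        [(L.lhomWithConstants M).IsExpansionOn N] (v : α → N),
        θ.Realize v ↔ (φ.withParams b).Realize v := by
  classical
  set χ := BoundedFormula.constantsVarsEquiv θ
  -- the finitely many constants from `M` that occur in `θ` become the parameters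
  set e := χ.freeVarFinset.toLeft.equivFin
  let f : χ.freeVarFinset → α ⊕ Fin χ.freeVarFinset.toLeft.card
    | ⟨Sum.inl a, h⟩ => Sum.inr (e ⟨a, Finset.mem_toLeft.2 h⟩)
    | ⟨Sum.inr i, _⟩ => Sum.inl i
  refine ⟨_, χ.restrictFreeVar f, fun j => e.symm j, fun v => ?_⟩
  rw [realize_withParams, Formula.Realize, ← BoundedFormula.realize_constantsVarsEquiv,
    Formula.Realize, BoundedFormula.realize_restrictFreeVar]
  rintro ⟨a | i, h⟩ <;> simp [f]

/-- `∃ x, ⋀ᵢ ±φ(x, yᵢ)`, the sign of the `i`-th conjunct being the truth value of `P i`. -/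
noncomputable def Formula.existsPattern [Finite α] {ι : Type*} [Finite ι]
    (φ : L.Formula (α ⊕ Fin m)) (P : ι → Prop) [DecidablePred P] : L.Formula (ι × Fin m) :=
  Formula.iExs α <| Formula.iInf fun i =>
    let ψ := φ.relabel (Sum.elim Sum.inr fun j => Sum.inl (i, j))
    if P i then ψ else ∼ψ

theorem Formula.realize_existsPattern [Finite α] {ι : Type*} [Finite ι]
    (φ : L.Formula (α ⊕ Fin m)) (P : ι → Prop) [DecidablePred P]
    {K : Type*} [L.Structure K] (w : ι → Fin m → K) :
    (φ.existsPattern P).Realize (fun q => w q.1 q.2) ↔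
      ∃ a : α → K, ∀ i, φ.Realize (Sum.elim a (w i)) ↔ P i := by
  refine (Formula.realize_iExs).trans (exists_congr fun a => ?_)
  rw [Formula.realize_iInf]
  refine forall_congr' fun i => ?_
  have hψ : (φ.relabel (Sum.elim Sum.inr fun j => Sum.inl (i, j))).Realize
      (Sum.elim (fun q => w q.1 q.2) a) ↔ φ.Realize (Sum.elim a (w i)) := by
    rw [Formula.realize_relabel]
    congr! 1
    ext (x | j) <;> rfl
  split_ifs with hP <;> simp [hψ, hP]

namespace Theory.CompleteType

/-- The `φ`-type of `p`, recorded by its parameters. -/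
def paramSet {T : L[[M]].Theory} (p : T.CompleteType α) (φ : L.Formula (α ⊕ Fin m)) :
    Set (Fin m → M) :=
  {b | Formula.equivSentence (φ.withParams b) ∈ p}

theorem ext_paramSet {T : L[[M]].Theory} {p q : T.CompleteType α}
    (h : ∀ (m : ℕ) (φ : L.Formula (α ⊕ Fin m)), p.paramSet φ = q.paramSet φ) : p = q := by
  have key : ∀ σ : L[[M]][[α]].Sentence, ∃ (m : ℕ) (φ : L.Formula (α ⊕ Fin m)) (b : Fin m → M),
      ∀ r : T.CompleteType α, σ ∈ r ↔ b ∈ r.paramSet φ := fun σ => by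
    obtain ⟨m, φ, b, hφ⟩ := (Formula.equivSentence.symm σ).exists_withParams_iff
    refine ⟨m, φ, b, fun r => ?_⟩
    obtain ⟨N, v, rfl⟩ := exists_modelType_is_realized_in T r
    let : L.Structure N := (L.lhomWithConstants M).reduct N
    rw [paramSet, Set.mem_ofPred_eq, CompleteType.mem_typeOf, CompleteType.formula_mem_typeOf, hφ]
  refine SetLike.ext fun σ => ?_
  obtain ⟨m, φ, b, hσ⟩ := key σ
  rw [hσ, hσ, h]

theorem exists_realize_iff_mem_paramSet [L.Structure M] [Finite α]
    (p : (L.elementaryDiagram M).CompleteType α) (φ : L.Formula (α ⊕ Fin m))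
    (C : Finset (Fin m → M)) :
    ∃ a : α → M, ∀ b ∈ C, φ.Realize (Sum.elim a b) ↔ b ∈ p.paramSet φ := by
  classical
  obtain ⟨N, v, rfl⟩ := exists_modelType_is_realized_in _ p
  let : L.Structure N := (L.lhomWithConstants M).reduct N
  let e := ElementaryEmbedding.ofModelsElementaryDiagram L M N
  set P : C → Prop := fun b => (b : Fin m → M) ∈ (typeOf (L.elementaryDiagram M) v).paramSet φ
  have hN : (φ.existsPattern P).Realize (fun q => e (q.1.1 q.2)) :=
    (φ.realize_existsPattern P fun b => e ∘ b).2
      ⟨v, fun b => ((formula_mem_typeOf (T := L.elementaryDiagram M)).trans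
        (φ.realize_withParams _ v)).symm⟩
  obtain ⟨a, ha⟩ := (φ.realize_existsPattern P fun b : C => (b : Fin m → M)).1
    ((e.map_formula (φ.existsPattern P) fun q => q.1.1 q.2).1 hN)
  exact ⟨a, fun b hb => ha ⟨b, hb⟩⟩

end Theory.CompleteType

theorem card_formula_le_of_finite {β : Type} [Finite β] : #(L.Formula β) ≤ max L.card ℵ₀ := by
  refine (mk_le_of_injective (sigma_mk_injective (i := 0))).trans <|
    BoundedFormula.card_le.trans (max_le le_sup_right ?_)
  calc lift #β + lift L.card ≤ max L.card ℵ₀ + max L.card ℵ₀ :=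
        add_le_add ((lift_le_aleph0.2 (mk_le_aleph0 (α := β))).trans le_sup_right)
          (by rw [lift_uzero]; exact le_sup_left)
    _ = max L.card ℵ₀ := add_eq_self le_sup_right

theorem card_sigma_formula_le (n : ℕ) :
    #(Σ m : ℕ, L.Formula (Fin n ⊕ Fin m)) ≤ max L.card ℵ₀ := by
  rw [mk_sigma]
  refine (sum_le_sum _ _ fun m => card_formula_le_of_finite).trans ?_
  rw [sum_const, mk_nat, lift_aleph0, lift_uzero]
  exact mul_le_of_le le_sup_right le_sup_right le_rfl

end FirstOrder.Language

theorem Cardinal.mk_finset_le_of_le {X : Type u} {c : Cardinal.{u}} (hX : #X ≤ c) (hc : ℵ₀ ≤ c) :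
    #(Finset X) ≤ c := by
  classical
  exact (mk_le_of_surjective List.toFinset_surjective).trans <|
    (mk_list_le_max X).trans (max_le hc hX)

theorem Cardinal.mk_fin_arrow_le {X : Type u} {c : Cardinal.{u}} (n : ℕ) (hX : #X ≤ c)
    (hc : ℵ₀ ≤ c) : #(Fin n → X) ≤ c := by
  rw [mk_arrow, lift_uzero, mk_fin, lift_natCast, power_natCast]
  exact (power_le_power_right hX).trans (power_nat_le hc)

namespace FirstOrder.Language

variable {L : Language.{u, u}} {T : L.Theory} {n m : ℕ}

theorem Theory.not_hasLadder_realize (hT : ¬ T.HasOrderProperty) (M : T.ModelType.{u, u, u})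
    (φ : L.Formula (Fin n ⊕ Fin m)) :
    ¬ HasLadder fun (a : Fin n → M) (b : Fin m → M) => φ.Realize (Sum.elim a b) :=
  fun ⟨a, b, hab⟩ => hT ⟨n, m, φ, M, a, b, hab⟩

open Classical in
theorem Theory.CompleteType.exists_finset_paramSet_eq (hT : ¬ T.HasOrderProperty)
    {M : T.ModelType.{u, u, u}} (p : (L.elementaryDiagram M).CompleteType (Fin n))
    (φ : L.Formula (Fin n ⊕ Fin m)) :
    ∃ (s : Finset (Fin n → M)) (Q : Finset (Finset (Fin n → M))),
      p.paramSet φ = {b | {a ∈ s | φ.Realize (Sum.elim a b)} ∈ Q} :=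
  exists_finset_profile_of_not_hasLadder (p.exists_realize_iff_mem_paramSet φ)
    (Theory.not_hasLadder_realize hT M φ) <| by
      simpa only [Formula.realize_not] using Theory.not_hasLadder_realize hT M φ.not

theorem Theory.card_completeType_le_of_not_hasOrderProperty (hT : ¬ T.HasOrderProperty)
    (M : T.ModelType.{u, u, u}) (n : ℕ) {lam : Cardinal.{u}} (hlam : ℵ₀ ≤ lam)
    (hpow : lam ^ max L.card ℵ₀ ≤ lam) (hM : #M ≤ lam) :
    #((L.elementaryDiagram M).CompleteType (Fin n)) ≤ lam := by
  choose s Q hsQ using fun p (φ : Σ m, L.Formula (Fin n ⊕ Fin m)) =>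
    CompleteType.exists_finset_paramSet_eq hT p φ.2
  have hinj : Function.Injective fun p φ => (s p φ, Q p φ) := fun p q hpq =>
    CompleteType.ext_paramSet fun m φ => by
      have h := congr_fun hpq ⟨m, φ⟩
      simp only [Prod.mk.injEq] at h
      rw [hsQ p ⟨m, φ⟩, hsQ q ⟨m, φ⟩, h.1, h.2]
  have hcode : #(Finset (Fin n → M) × Finset (Finset (Fin n → M))) ≤ lam := by
    have hs := mk_finset_le_of_le (mk_fin_arrow_le n hM hlam) hlam
    rw [mk_prod, lift_id, lift_id]
    exact mul_le_of_le hlam hs (mk_finset_le_of_le hs hlam)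
  calc _ ≤ #((Σ m, L.Formula (Fin n ⊕ Fin m)) → Finset (Fin n → M) × Finset (Finset (Fin n → M))) :=
        mk_le_of_injective hinj
    _ ≤ lam ^ max L.card ℵ₀ := by
        rw [← power_def]
        exact (power_le_power_right hcode).trans
          (power_le_power_left (aleph0_pos.trans_le hlam).ne' (card_sigma_formula_le n))
    _ ≤ lam := hpow

end FirstOrder.Language

theorem type_counting_of_stable_general {L : FirstOrder.Language.{u, u}}
    (T : L.Theory) (hstable : ¬ T.HasOrderProperty) :
    ∀ lam : Cardinal.{u}, ℵ₀ ≤ lam → lam = lam ^ max L.card ℵ₀ →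
      ∀ M : FirstOrder.Language.Theory.ModelType.{u, u, u} T, #M ≤ lam →
        #((L.elementaryDiagram M).CompleteType (Fin 1)) ≤ lam :=
  fun _ hlam hpow M hM => T.card_completeType_le_of_not_hasOrderProperty hstable M 1 hlam hpow.ge hM

/-- If `T` is stable (no formula has the order property), then for every infinite cardinal
`λ` with `λ = λ ^ max(|L|, ℵ₀)` and every model `M` of `T` of cardinality at most `λ`,
there are at most `λ` complete 1-types over `M`. -/
theorem type_counting_of_stable {L : FirstOrder.Language.{u, u}}
    (T : L.Theory) (hT : T.IsComplete) (hstable : ¬ T.HasOrderProperty) :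
    ∀ lam : Cardinal.{u}, ℵ₀ ≤ lam → lam = lam ^ max L.card ℵ₀ →
      ∀ M : FirstOrder.Language.Theory.ModelType.{u, u, u} T, #M ≤ lam →
        #((L.elementaryDiagram M).CompleteType (Fin 1)) ≤ lam :=
  type_counting_of_stable_general T hstable
end

section
/- Let M₁ be an elementary submodel of M₂ (both models of a complete first-order theory T) and let a, b be elements of M₂. Then a and b realize the same complete type over M₁ if and only if there exist an elementary extension N of M₂ and an automorphism f of N which fixes M₁ pointwise (f ↾ M₁ is the identity) and maps a to b. -/
/-!
If `a` and `b` have the same type over `M₁`, compactness applied to two copies of the elementary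
diagram of `M₂` glued along `M₁` and `a = b` gives elementary embeddings `k, l : M₂ → D` that agree
on `M₁` and satisfy `k a = l b`. Amalgamating `k` and `l` over `M₂` in the same way, and so on,
yields a chain `A₀ → A₁ → A₂ → ⋯` with two elementary maps `left, right` at every step and
`left ∘ left = right ∘ right`. Let `N` be the direct limit of the even stages along `right ∘ right`;
it is an elementary extension of `A₀ = M₂` by the elementary chain theorem. The maps `right ∘ left`
between consecutive even stages induce an embedding of `N` into itself, which is onto because
`(right ∘ left) ∘ (left ∘ right) = right ∘ right ∘ right ∘ right`; this automorphism sends `a` to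
`b` and fixes `M₁`. Conversely, automorphisms and elementary embeddings preserve all formulas.
-/

open FirstOrder Cardinal

universe u

namespace FirstOrder.Language

variable {L : Language}

section Realize

variable {M N : Type*} [L.Structure M] [L.Structure N]

theorem realize_comp_iff_of_forall_sumElim {A β : Type*} [Nonempty A] {p : A → M} {a b : β → M}
    (h : ∀ (n : ℕ) (φ : L.Formula (Fin n ⊕ β)) (c : Fin n → A),
      φ.Realize (Sum.elim (p ∘ c) a) ↔ φ.Realize (Sum.elim (p ∘ c) b))
    (n : ℕ) (φ : L.Formula (Fin n)) (v : Fin n → A ⊕ β) :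
    φ.Realize (Sum.elim p a ∘ v) ↔ φ.Realize (Sum.elim p b ∘ v) := by
  let r : Fin n → Fin n ⊕ β := fun i => Sum.map (fun _ => i) id (v i)
  let c : Fin n → A := fun i => (v i).elim id fun _ => Classical.arbitrary A
  have hr : ∀ e : β → M, Sum.elim (p ∘ c) e ∘ r = Sum.elim p e ∘ v := fun e => by
    ext i
    cases hv : v i <;> simp [r, c, hv]
  simpa only [Formula.realize_relabel, hr] using h n (φ.relabel r) c

theorem realize_iff_realize_of_forall_fin {ι : Type*} {x : ι → M} {y : ι → N}
    (h : ∀ (n : ℕ) (φ : L.Formula (Fin n)) (v : Fin n → ι),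
      φ.Realize (x ∘ v) ↔ φ.Realize (y ∘ v))
    (φ : L.Formula ι) : φ.Realize x ↔ φ.Realize y := by
  classical
  let e := φ.freeVarFinset.equivFin
  let v : Fin φ.freeVarFinset.card → ι := (↑) ∘ e.symm
  have h₁ := BoundedFormula.realize_restrictFreeVar (φ := φ) (f := e) (v := x ∘ v) (xs := default)
    x (by simp [v])
  have h₂ := BoundedFormula.realize_restrictFreeVar (φ := φ) (f := e) (v := y ∘ v) (xs := default)
    y (by simp [v])
  exact h₁.symm.trans ((h _ _ v).trans h₂)

theorem exists_realize_sumElim_of_realize [Nonempty M] {ι γ : Type*} {x : ι → M} {y : ι → N}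
    (hxy : ∀ φ : L.Formula ι, φ.Realize x ↔ φ.Realize y)
    {ψ : L.Formula (ι ⊕ γ)} {w : γ → N} (hψ : ψ.Realize (Sum.elim y w)) :
    ∃ w' : γ → M, ψ.Realize (Sum.elim x w') := by
  classical
  let s := ψ.freeVarFinset.toRight
  let r : ψ.freeVarFinset → ι ⊕ s := fun v =>
    Sum.casesOn (motive := fun v => v ∈ ψ.freeVarFinset → ι ⊕ s) v.1
      (fun i _ => Sum.inl i) (fun g hg => Sum.inr ⟨g, Finset.mem_toRight.2 hg⟩) v.2
  have hN : (Formula.iExs s (ψ.restrictFreeVar r)).Realize y :=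
    Formula.realize_iExs.2 ⟨w ∘ (↑), (BoundedFormula.realize_restrictFreeVar _
      (by rintro ⟨_ | _, _⟩ <;> rfl)).2 hψ⟩
  obtain ⟨z, hz⟩ := Formula.realize_iExs.1 ((hxy _).2 hN)
  refine ⟨fun g => if hg : g ∈ s then z ⟨g, hg⟩ else Classical.arbitrary M,
    (BoundedFormula.realize_restrictFreeVar _ ?_).1 hz⟩
  rintro ⟨_ | g, hg⟩
  · rfl
  · simp [r, s, hg]

theorem exists_realize_elementaryDiagram_of_finset [Nonempty M] {ι : Type*} {x : ι → M}
    {y : ι → N} (hxy : ∀ φ : L.Formula ι, φ.Realize x ↔ φ.Realize y)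
    (S : Finset L[[N]].Sentence) (hS : ∀ σ ∈ S, σ ∈ L.elementaryDiagram N) (J : Finset ι) :
    ∃ g : N → M, (∀ σ ∈ S, (Formula.equivSentence.symm σ).Realize g) ∧ ∀ j ∈ J, g (y j) = x j := by
  let ψ : L.Formula (ι ⊕ N) :=
    (Formula.iInf fun σ : S => (Formula.equivSentence.symm σ.1).relabel Sum.inr) ⊓
      Formula.iInf fun j : J => Term.equal (Term.var (Sum.inl j.1)) (Term.var (Sum.inr (y j.1)))
  have hψ : ψ.Realize (Sum.elim y id) := by
    simp only [ψ, Formula.realize_inf, Formula.realize_iInf, Formula.realize_relabel,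
      Formula.realize_equal, Term.realize_var, Sum.elim_comp_inr, Sum.elim_inl, Sum.elim_inr,
      Subtype.forall]
    exact ⟨fun σ hσ => (Formula.realize_equivSentence_symm_con N σ).2 (hS σ hσ), fun _ _ => rfl⟩
  obtain ⟨g, hg⟩ := exists_realize_sumElim_of_realize hxy hψ
  simp only [ψ, Formula.realize_inf, Formula.realize_iInf, Formula.realize_relabel,
    Formula.realize_equal, Term.realize_var, Sum.elim_comp_inr, Sum.elim_inl, Sum.elim_inr,
    Subtype.forall] at hg
  exact ⟨g, hg.1, fun j hj => (hg.2 j hj).symm⟩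

theorem realize_iff_of_equiv_comp {α : Type*} (g : M ↪ₑ[L] N) (f : N ≃[L] N) {x y : α → M}
    (h : ∀ i, f (g (x i)) = g (y i)) (φ : L.Formula α) : φ.Realize x ↔ φ.Realize y :=
  calc φ.Realize x ↔ φ.Realize (f ∘ g ∘ x) := by
        rw [StrongHomClass.realize_formula, ElementaryEmbedding.map_formula]
    _ ↔ φ.Realize y := by rw [show f ∘ g ∘ x = g ∘ y from funext h, ElementaryEmbedding.map_formula]

end Realize

namespace DirectLimit

variable {ι : Type*} [Preorder ι] [IsDirectedOrder ι] [Nonempty ι] {G : ι → Type*}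
  [∀ i, L.Structure (G i)] {f : ∀ i j, i ≤ j → G i ↪[L] G j}
  [DirectedSystem G fun i j h => f i j h]

theorem realize_boundedFormula_of (hf : ∀ i j (h : i ≤ j), ∃ e : G i ↪ₑ[L] G j, ⇑e = f i j h)
    {α : Type*} {n : ℕ} (φ : L.BoundedFormula α n) (i : ι) (v : α → G i) (xs : Fin n → G i) :
    φ.Realize (of L ι G f i ∘ v) (of L ι G f i ∘ xs) ↔ φ.Realize v xs := by
  induction φ generalizing i with
  | falsum => rfl
  | equal t₁ t₂ =>
    simp only [BoundedFormula.Realize, ← Sum.comp_elim, HomClass.realize_term]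
    exact (of L ι G f i).injective.eq_iff
  | rel R ts =>
    simp only [BoundedFormula.Realize, ← Sum.comp_elim, HomClass.realize_term]
    exact (of L ι G f i).map_rel R _
  | imp φ ψ ih₁ ih₂ => simp only [BoundedFormula.realize_imp, ih₁, ih₂]
  | all φ ih =>
    simp only [BoundedFormula.realize_all]
    refine ⟨fun h z => ?_, fun h z => ?_⟩
    · simpa only [← ih, Fin.comp_snoc] using h (of L ι G f i z)
    · -- `z` lives in some `G j`; over a common upper bound `k` of `i` and `j`,
      -- `∀' φ` still holds because `f i k` is elementary.
      obtain ⟨j, w, rfl⟩ := exists_of z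
      obtain ⟨k, hik, hjk⟩ := exists_ge_ge i j
      obtain ⟨e, he⟩ := hf i k hik
      have hall := (e.map_boundedFormula φ.all v xs).2 (BoundedFormula.realize_all.2 h)
      have hk := (ih k (e ∘ v) (Fin.snoc (e ∘ xs) (f j k hjk w))).2
        (BoundedFormula.realize_all.1 hall _)
      have hlift : of L ι G f k ∘ e = of L ι G f i := by
        ext a
        rw [Function.comp_apply, he]
        exact of_f
      rwa [Fin.comp_snoc, ← Function.comp_assoc, ← Function.comp_assoc, hlift, of_f] at hk

noncomputable def elementaryOf (hf : ∀ i j (h : i ≤ j), ∃ e : G i ↪ₑ[L] G j, ⇑e = f i j h)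
    (i : ι) : G i ↪ₑ[L] DirectLimit G f where
  toFun := of L ι G f i
  map_formula' _ φ xs := by
    simpa only [Formula.Realize, Subsingleton.elim _ (default : Fin 0 → _)] using
      realize_boundedFormula_of hf φ i xs default

end DirectLimit

namespace DirectedSystem

variable {G : ℕ → Type*} [∀ n, L.Structure (G n)]

theorem natLERec_succ (f : ∀ n, G n ↪[L] G (n + 1)) {i j : ℕ} (h : i ≤ j) (x : G i) :
    natLERec f i (j + 1) (h.trans j.le_succ) x = f j (natLERec f i j h x) := by
  simp only [coe_natLERec, Nat.leRecOn_succ h]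

theorem natLERec_comp_eq (f : ∀ n, G n ↪[L] G (n + 1)) {P : Type*} (g : ∀ n, G n → P)
    (hg : ∀ n x, g (n + 1) (f n x) = g n x) (i j : ℕ) (h : i ≤ j) (x : G i) :
    g j (natLERec f i j h x) = g i x := by
  induction j, h using Nat.le_induction with
  | base => rw [DirectedSystem.map_self]
  | succ j h ih => rw [natLERec_succ f h, hg, ih]

theorem exists_elementaryEmbedding_natLERec (f : ∀ n, G n ↪ₑ[L] G (n + 1)) (i j : ℕ)
    (h : i ≤ j) : ∃ e : G i ↪ₑ[L] G j, ⇑e = natLERec (fun n => (f n).toEmbedding) i j h := by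
  induction j, h using Nat.le_induction with
  | base => exact ⟨ElementaryEmbedding.refl L (G i), funext fun x => (map_self _ x).symm⟩
  | succ j h ih =>
    obtain ⟨e, he⟩ := ih
    exact ⟨(f j).comp e, funext fun x => by simp [natLERec_succ _ h, he]⟩

end DirectedSystem

theorem DirectLimit.of_succ {G : ℕ → Type*} [∀ n, L.Structure (G n)] (f : ∀ n, G n ↪[L] G (n + 1))
    (n : ℕ) (x : G n) :
    DirectLimit.of L ℕ G (DirectedSystem.natLERec f) (n + 1) (f n x) =
      DirectLimit.of L ℕ G (DirectedSystem.natLERec f) n x := by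
  rw [← DirectLimit.of_f (hij := n.le_succ), DirectedSystem.natLERec_succ f le_rfl,
    DirectedSystem.map_self]

noncomputable def Embedding.equivOfSurjective {M N : Type*} [L.Structure M] [L.Structure N]
    (f : M ↪[L] N) (hf : Function.Surjective f) : M ≃[L] N :=
  { Equiv.ofBijective f ⟨f.injective, hf⟩ with
    map_fun' := f.map_fun
    map_rel' := f.map_rel }

section Amalgamation

variable {L : Language.{u, u}}

section

variable {M N : Type u} [L.Structure M] [L.Structure N] {ι : Type*} (x : ι → M) (y : ι → N)

-- In `L[[M]][[N]]`, the constant of `m : M` is `Sum.inl (L.con m)` and that of `n : N` is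
-- `L[[M]].con n`.
variable (L) in
def amalgamTheory (S : Set L[[N]].Sentence) (J : Set ι) : L[[M]][[N]].Theory :=
  (L[[M]].lhomWithConstants N).onTheory (L.elementaryDiagram M) ∪
    ((L.lhomWithConstants M).addConstants N).onTheory (S ∩ L.elementaryDiagram N) ∪
    (fun i => Term.equal (Constants.term (Sum.inl (L.con (x i))))
      (Constants.term (L[[M]].con (y i)))) '' J

theorem amalgamTheory_mono {S S' : Set L[[N]].Sentence} {J J' : Set ι} (hS : S ⊆ S')
    (hJ : J ⊆ J') : L.amalgamTheory x y S J ⊆ L.amalgamTheory x y S' J' := by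
  unfold amalgamTheory
  gcongr
  exact Set.image_mono (Set.inter_subset_inter_left _ hS)

variable [Nonempty M] {x y}

theorem isSatisfiable_amalgamTheory_of_finset
    (hxy : ∀ φ : L.Formula ι, φ.Realize x ↔ φ.Realize y)
    (S : Finset L[[N]].Sentence) (J : Finset ι) : (L.amalgamTheory x y ↑S ↑J).IsSatisfiable := by
  classical
  obtain ⟨g, hdiag, hglued⟩ := exists_realize_elementaryDiagram_of_finset hxy
    (S.filter (· ∈ L.elementaryDiagram N)) (fun σ hσ => (Finset.mem_filter.1 hσ).2) J
  let := constantsOn.structure g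
  suffices M ⊨ L.amalgamTheory x y ↑S ↑J from Theory.Model.isSatisfiable M
  refine ⟨?_⟩
  rintro σ ((⟨σ, hσ, rfl⟩ | ⟨σ, ⟨hσS, hσN⟩, rfl⟩) | ⟨j, hj, rfl⟩)
  · exact (LHom.realize_onSentence M _ σ).2 hσ
  · refine (LHom.realize_onSentence M _ σ).2 ((Formula.realize_equivSentence_symm M σ g).1 ?_)
    exact hdiag σ (Finset.mem_filter.2 ⟨hσS, hσN⟩)
  · simp only [Sentence.Realize, Formula.realize_equal, Term.realize_constants]
    exact (hglued j hj).symm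

theorem isSatisfiable_amalgamTheory (hxy : ∀ φ : L.Formula ι, φ.Realize x ↔ φ.Realize y) :
    (L.amalgamTheory x y Set.univ Set.univ).IsSatisfiable := by
  classical
  let T (p : Finset L[[N]].Sentence × Finset ι) := L.amalgamTheory x y ↑p.1 ↑p.2
  have hT : Monotone T := fun p q hpq =>
    amalgamTheory_mono x y (Finset.coe_subset.2 hpq.1) (Finset.coe_subset.2 hpq.2)
  refine ((Theory.isSatisfiable_directed_union_iff hT.directed_le).2
    fun p => isSatisfiable_amalgamTheory_of_finset hxy p.1 p.2).mono ?_
  rintro σ ((hσ | ⟨σ, ⟨-, hσN⟩, rfl⟩) | ⟨j, -, rfl⟩)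
  · exact Set.mem_iUnion.2 ⟨⊥, Or.inl (Or.inl hσ)⟩
  · exact Set.mem_iUnion.2 ⟨({σ}, ∅), Or.inl (Or.inr ⟨σ, ⟨by simp, hσN⟩, rfl⟩)⟩
  · exact Set.mem_iUnion.2 ⟨(∅, {j}), Or.inr ⟨j, by simp, rfl⟩⟩

theorem exists_elementaryEmbedding_amalgam
    (hxy : ∀ φ : L.Formula ι, φ.Realize x ↔ φ.Realize y) :
    ∃ (D : CategoryTheory.Bundled.{u} L.Structure) (k : M ↪ₑ[L] D) (l : N ↪ₑ[L] D),
      ∀ i, k (x i) = l (y i) := by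
  obtain ⟨D⟩ := isSatisfiable_amalgamTheory hxy
  have hD {σ} (hσ : σ ∈ L.amalgamTheory x y Set.univ Set.univ) : D ⊨ σ :=
    Theory.realize_sentence_of_mem _ hσ
  let : L[[M]].Structure D := (L[[M]].lhomWithConstants N).reduct D
  let : L.Structure D := (L.lhomWithConstants M).reduct D
  let : L[[N]].Structure D := ((L.lhomWithConstants M).addConstants N).reduct D
  have : (L.lhomWithConstants N).IsExpansionOn D := ⟨fun _ _ => rfl, fun _ _ => rfl⟩
  have : D ⊨ L.elementaryDiagram M := ⟨fun σ hσ =>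
    (LHom.realize_onSentence D _ σ).1 (hD (Or.inl (Or.inl ⟨σ, hσ, rfl⟩)))⟩
  have : D ⊨ L.elementaryDiagram N := ⟨fun σ hσ =>
    (LHom.realize_onSentence D _ σ).1 (hD (Or.inl (Or.inr ⟨σ, ⟨trivial, hσ⟩, rfl⟩)))⟩
  refine ⟨.of (D : Type u), ElementaryEmbedding.ofModelsElementaryDiagram L M D,
    ElementaryEmbedding.ofModelsElementaryDiagram L N D, fun i => ?_⟩
  have := hD (Or.inr ⟨i, trivial, rfl⟩)
  simp only [Sentence.Realize, Formula.realize_equal, Term.realize_constants] at this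
  exact (Term.realize_constants (M := D)).symm.trans this

end

structure ElementaryPair (L : Language.{u, u}) where
  source : CategoryTheory.Bundled.{u} L.Structure
  target : CategoryTheory.Bundled.{u} L.Structure
  [nonempty : Nonempty source]
  left : source ↪ₑ[L] target
  right : source ↪ₑ[L] target

namespace ElementaryPair

attribute [instance] ElementaryPair.nonempty

variable (s : ElementaryPair L)

theorem exists_coequalizing :
    ∃ (D : CategoryTheory.Bundled.{u} L.Structure) (k l : s.target ↪ₑ[L] D),
      ∀ x, k (s.left x) = l (s.right x) :=
  have : Nonempty s.target := s.nonempty.map s.left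
  exists_elementaryEmbedding_amalgam fun φ =>
    (s.left.map_formula φ id).trans (s.right.map_formula φ id).symm

noncomputable def next : ElementaryPair L where
  source := s.target
  target := s.exists_coequalizing.choose
  nonempty := s.nonempty.map s.left
  left := s.exists_coequalizing.choose_spec.choose
  right := s.exists_coequalizing.choose_spec.choose_spec.choose

theorem next_left_left (x : s.source) : s.next.left (s.left x) = s.next.right (s.right x) :=
  s.exists_coequalizing.choose_spec.choose_spec.choose_spec x

noncomputable def chain : ℕ → ElementaryPair L
  | 0 => s
  | n + 1 => (chain n).next

abbrev stage (n : ℕ) : Type u := (s.chain n).source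

noncomputable def leftStep (n : ℕ) : s.stage n ↪ₑ[L] s.stage (n + 1) := (s.chain n).left

noncomputable def rightStep (n : ℕ) : s.stage n ↪ₑ[L] s.stage (n + 1) := (s.chain n).right

theorem leftStep_leftStep (n : ℕ) (x : s.stage n) :
    s.leftStep (n + 1) (s.leftStep n x) = s.rightStep (n + 1) (s.rightStep n x) :=
  (s.chain n).next_left_left x

abbrev evenStage (n : ℕ) : Type u := s.stage (2 * n)

noncomputable def evenStep (n : ℕ) : s.evenStage n ↪ₑ[L] s.evenStage (n + 1) :=
  (s.rightStep (2 * n + 1)).comp (s.rightStep (2 * n))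

noncomputable abbrev evenSystem : ∀ i j, i ≤ j → s.evenStage i ↪[L] s.evenStage j :=
  DirectedSystem.natLERec fun n => (s.evenStep n).toEmbedding

abbrev limit : Type u := DirectLimit s.evenStage s.evenSystem

noncomputable abbrev toLimit (n : ℕ) : s.evenStage n ↪[L] s.limit :=
  DirectLimit.of L ℕ s.evenStage s.evenSystem n

theorem toLimit_evenStep (n : ℕ) (x : s.evenStage n) :
    s.toLimit (n + 1) (s.evenStep n x) = s.toLimit n x :=
  DirectLimit.of_succ _ n x

noncomputable def limitEmbedding : s.source ↪ₑ[L] s.limit :=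
  DirectLimit.elementaryOf (DirectedSystem.exists_elementaryEmbedding_natLERec s.evenStep) 0

noncomputable def forthStep (n : ℕ) : s.evenStage n ↪ₑ[L] s.evenStage (n + 1) :=
  (s.rightStep (2 * n + 1)).comp (s.leftStep (2 * n))

noncomputable def backStep (n : ℕ) : s.evenStage n ↪ₑ[L] s.evenStage (n + 1) :=
  (s.leftStep (2 * n + 1)).comp (s.rightStep (2 * n))

theorem forthStep_evenStep (n : ℕ) (x : s.evenStage n) :
    s.forthStep (n + 1) (s.evenStep n x) = s.evenStep (n + 1) (s.forthStep n x) := by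
  show s.rightStep (2 * n + 3)
      (s.leftStep (2 * n + 2) (s.rightStep (2 * n + 1) (s.rightStep (2 * n) x))) =
    s.rightStep (2 * n + 3)
      (s.rightStep (2 * n + 2) (s.rightStep (2 * n + 1) (s.leftStep (2 * n) x)))
  rw [← leftStep_leftStep, leftStep_leftStep]

theorem forthStep_backStep (n : ℕ) (x : s.evenStage n) :
    s.forthStep (n + 1) (s.backStep n x) = s.evenStep (n + 1) (s.evenStep n x) := by
  show s.rightStep (2 * n + 3)
      (s.leftStep (2 * n + 2) (s.leftStep (2 * n + 1) (s.rightStep (2 * n) x))) =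
    s.rightStep (2 * n + 3)
      (s.rightStep (2 * n + 2) (s.rightStep (2 * n + 1) (s.rightStep (2 * n) x)))
  rw [leftStep_leftStep]

noncomputable def shift : s.limit ↪[L] s.limit :=
  DirectLimit.lift L ℕ s.evenStage s.evenSystem
    (fun n => (s.toLimit (n + 1)).comp (s.forthStep n).toEmbedding)
    (DirectedSystem.natLERec_comp_eq _ (fun n x => s.toLimit (n + 1) (s.forthStep n x))
      fun n x => by
        simp only [ElementaryEmbedding.coe_toEmbedding]
        rw [forthStep_evenStep, toLimit_evenStep])

theorem shift_toLimit (n : ℕ) (x : s.evenStage n) :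
    s.shift (s.toLimit n x) = s.toLimit (n + 1) (s.forthStep n x) :=
  DirectLimit.lift_of ..

theorem shift_surjective : Function.Surjective s.shift := by
  intro z
  obtain ⟨n, x, rfl⟩ := DirectLimit.exists_of z
  refine ⟨s.toLimit (n + 1) (s.backStep n x), ?_⟩
  rw [shift_toLimit, forthStep_backStep, toLimit_evenStep, toLimit_evenStep]

noncomputable def limitEquiv : s.limit ≃[L] s.limit :=
  s.shift.equivOfSurjective s.shift_surjective

theorem limitEquiv_limitEmbedding {x y : s.source} (h : s.left x = s.right y) :
    s.limitEquiv (s.limitEmbedding x) = s.limitEmbedding y := by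
  calc s.shift (s.toLimit 0 x) = s.toLimit 1 (s.rightStep 1 (s.left x)) := s.shift_toLimit 0 x
    _ = s.toLimit 1 (s.evenStep 0 y) := by rw [h]; rfl
    _ = s.limitEmbedding y := s.toLimit_evenStep 0 y

end ElementaryPair

end Amalgamation

end FirstOrder.Language

theorem same_type_iff_automorphism_general {L : FirstOrder.Language.{u, u}} (M₂ : Type u) [L.Structure M₂]
    (M₁ : L.ElementarySubstructure M₂) (a b : M₂) :
    (∀ (n : ℕ) (φ : L.Formula (Fin n ⊕ Fin 1)) (c : Fin n → M₁),
        φ.Realize (Sum.elim (fun i => (c i : M₂)) (fun _ => a)) ↔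
          φ.Realize (Sum.elim (fun i => (c i : M₂)) (fun _ => b))) ↔
      ∃ (N : Type u) (_ : L.Structure N) (g : M₂ ↪ₑ[L] N) (f : N ≃[L] N),
        (∀ x : M₁, f (g (x : M₂)) = g (x : M₂)) ∧ f (g a) = g b := by
  constructor
  · intro hab
    have hM₂ : Nonempty M₂ := ⟨a⟩
    obtain ⟨D, k, l, hkl⟩ := Language.exists_elementaryEmbedding_amalgam
      (Language.realize_iff_realize_of_forall_fin (Language.realize_comp_iff_of_forall_sumElim hab))
    let s : Language.ElementaryPair L :=
      { source := .of M₂, target := D, nonempty := hM₂, left := k, right := l }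
    exact ⟨s.limit, inferInstance, s.limitEmbedding, s.limitEquiv,
      fun x => s.limitEquiv_limitEmbedding (hkl (.inl x)),
      s.limitEquiv_limitEmbedding (hkl (.inr 0))⟩
  · rintro ⟨N, _, g, f, hfix, hab⟩ n φ c
    refine Language.realize_iff_of_equiv_comp g f (fun i => ?_) φ
    rcases i with i | i
    exacts [hfix (c i), hab]

/-- Two elements `a, b` of a model `M₂` of a complete theory `T` realize the same complete
type over an elementary submodel `M₁` if and only if there are an elementary extension `N`
of `M₂` and an automorphism of `N` fixing `M₁` pointwise and mapping `a` to `b`. -/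
theorem same_type_iff_automorphism {L : FirstOrder.Language.{u, u}} (T : L.Theory)
    (hT : T.IsComplete) (M₂ : Type u) [L.Structure M₂] (hM₂ : M₂ ⊨ T)
    (M₁ : L.ElementarySubstructure M₂) (a b : M₂) :
    (∀ (n : ℕ) (φ : L.Formula (Fin n ⊕ Fin 1)) (c : Fin n → M₁),
        φ.Realize (Sum.elim (fun i => (c i : M₂)) (fun _ => a)) ↔
          φ.Realize (Sum.elim (fun i => (c i : M₂)) (fun _ => b))) ↔
      ∃ (N : Type u) (_ : L.Structure N) (g : M₂ ↪ₑ[L] N) (f : N ≃[L] N),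
        (∀ x : M₁, f (g (x : M₂)) = g (x : M₂)) ∧ f (g a) = g b :=
  same_type_iff_automorphism_general M₂ M₁ a b
end

section
/- A complete first-order theory T is unstable (some formula has the order property) if and only if some formula has the independence property or some formula has the strict order property. That is: there exist a formula φ(x̄,ȳ), a model M of T, and tuples ā_i, b̄_j (i,j < ω) with M ⊨ φ(ā_i,b̄_j) iff i < j, if and only if either (IP) there exist a formula ψ(x̄,ȳ), a model M of T, and tuples ā_i (i < ω) such that for every subset S ⊆ ω there is a tuple b̄_S in M with M ⊨ ψ(ā_i, b̄_S) iff i ∈ S, or (SOP) there exist a formula χ(x̄,ȳ), a model M of T, and tuples b̄_n (n < ω) such that the definable sets χ(M, b̄_n) = { ā in M : M ⊨ χ(ā, b̄_n) } form a strictly increasing chain: χ(M, b̄_n) ⊊ χ(M, b̄_m) whenever n < m. -/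
/-!
Ramsey's theorem and compactness turn a witness `φ(āᵢ, b̄ⱼ) ↔ i < j` of the order property into
parameters `(b̄_q)_{q ∈ ℚ}` in some model along which the realizability of a `φ`-pattern
`φ(x̄, b̄_{q_j}) ↔ s_j` (`q₀ < ⋯ < q_{k-1}`) depends only on `s`, and every monotone pattern
`false … false true … true` is realized. Every Boolean string arises from a monotone one by turning
adjacent pairs `(false, true)` into `(true, false)`. If this never destroys realizability, all
patterns are realized, and compactness gives the independence property for `φ` with its variables
exchanged. Otherwise some realized `s` with `(s_q, s_{q+1}) = (false, true)` has an unrealized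
swap. Then, with the other parameters fixed at their positions, the set of `x̄` that realize the
rest of `s` and satisfy `φ(x̄, b̄_t)` strictly grows as `t` increases between the positions of the
neighbouring parameters: the strict order property.
-/

open FirstOrder Cardinal

universe u

/-- `T` has the independence property: for some formula `ψ(x̄, ȳ)`, some model `M` of `T`
and tuples `āᵢ` (`i < ω`), every subset `S ⊆ ω` is cut out by some parameter `b̄_S`:
`M ⊨ ψ(āᵢ, b̄_S)` iff `i ∈ S`. -/
def FirstOrder.Language.Theory.HasIndependenceProperty {L : FirstOrder.Language.{u, u}}
    (T : L.Theory) : Prop :=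
  ∃ (n m : ℕ) (ψ : L.Formula (Fin n ⊕ Fin m))
    (M : FirstOrder.Language.Theory.ModelType.{u, u, u} T)
    (a : ℕ → Fin n → M),
    ∀ S : Set ℕ, ∃ b : Fin m → M, ∀ i : ℕ, ψ.Realize (Sum.elim (a i) b) ↔ i ∈ S

/-- `T` has the strict order property: for some formula `χ(x̄, ȳ)`, some model `M` of `T`
and parameters `b̄ₙ` (`n < ω`), the definable sets `χ(M, b̄ₙ)` form a strictly increasing
chain under inclusion. -/
def FirstOrder.Language.Theory.HasStrictOrderProperty {L : FirstOrder.Language.{u, u}}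
    (T : L.Theory) : Prop :=
  ∃ (n m : ℕ) (χ : L.Formula (Fin n ⊕ Fin m))
    (M : FirstOrder.Language.Theory.ModelType.{u, u, u} T)
    (b : ℕ → Fin m → M),
    ∀ i j : ℕ, i < j →
      {x : Fin n → M | χ.Realize (Sum.elim x (b i))} ⊂
        {x : Fin n → M | χ.Realize (Sum.elim x (b j))}

open Set Function

universe v w

theorem exists_infinite_homogeneous {C : Type*} [Finite C] (k : ℕ) (f : (Fin k → ℕ) → C) {H : Set ℕ}
    (hH : H.Infinite) :
    ∃ H' ⊆ H, H'.Infinite ∧ ∃ c, ∀ v : Fin k → ℕ, StrictMono v → (∀ j, v j ∈ H') → f v = c := by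
  induction k generalizing H with
  | zero => exact ⟨H, subset_rfl, hH, f Fin.elim0, fun v _ _ => congrArg f (Subsingleton.elim _ _)⟩
  | succ k ih =>
    have step : ∀ S : {S : Set ℕ // S.Infinite}, ∃ (x : ℕ) (S' : {S : Set ℕ // S.Infinite}) (c : C),
        x ∈ S.1 ∧ S'.1 ⊆ S.1 ∩ Ioi x ∧
          ∀ v : Fin k → ℕ, StrictMono v → (∀ j, v j ∈ S'.1) → f (Fin.cons x v) = c := by
      rintro ⟨S, hS⟩
      obtain ⟨x, hx⟩ := hS.nonempty
      obtain ⟨S', hS'S, hS', c, hc⟩ :=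
        ih (fun v => f (Fin.cons x v)) (hS.sdiff (finite_Iic x) : (S \ Iic x).Infinite)
      exact ⟨x, ⟨S', hS'⟩, c, hx, fun y hy => ⟨(hS'S hy).1, mem_Ioi.2 (not_le.1 (hS'S hy).2)⟩, hc⟩
    choose x next c hx hnext hc using step
    let S : ℕ → {S : Set ℕ // S.Infinite} := fun i => next^[i] ⟨H, hH⟩
    have hS_succ (i : ℕ) : S (i + 1) = next (S i) := Function.iterate_succ_apply' _ _ _
    have hS_anti : Antitone fun i => (S i).1 := antitone_nat_of_succ_le fun i => by
      rw [hS_succ]; exact fun y hy => (hnext _ hy).1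
    have hx_mem {i j : ℕ} (hij : i < j) : x (S j) ∈ (S (i + 1)).1 :=
      hS_anti hij (hx (S j))
    have hx_mono : StrictMono fun i => x (S i) := strictMono_nat_of_lt_succ fun i =>
      (hnext (S i) (hS_succ i ▸ hx (S (i + 1)))).2
    obtain ⟨c₀, hc₀⟩ := Finite.exists_infinite_fiber fun i => c (S i)
    refine ⟨(fun i => x (S i)) '' (fun i => c (S i)) ⁻¹' {c₀}, ?_, ?_, c₀, ?_⟩
    · rintro _ ⟨i, -, rfl⟩
      exact hS_anti (Nat.zero_le i) (hx (S i))
    · exact (infinite_coe_iff.1 hc₀).image hx_mono.injective.injOn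
    · intro v hv hvH
      obtain ⟨i, hi, hvi : x (S i) = v 0⟩ := hvH 0
      have htail : ∀ j, Fin.tail v j ∈ (next (S i)).1 := fun j => by
        obtain ⟨l, -, hvl : x (S l) = v j.succ⟩ := hvH j.succ
        have hil : i < l := hx_mono.lt_iff_lt.1 (by rw [hvi, hvl]; exact hv (Fin.succ_pos j))
        rw [← hS_succ, Fin.tail, ← hvl]
        exact hx_mem hil
      rw [← Fin.cons_self_tail v, ← hvi, hc _ (Fin.tail v) (hv.comp Fin.strictMono_succ) htail]
      exact hi

theorem exists_infinite_homogeneous_finset {ι : Type*} (s : Finset ι) {k : ι → ℕ}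
    {C : ι → Type*} [∀ i, Finite (C i)] (f : ∀ i, (Fin (k i) → ℕ) → C i) {H : Set ℕ}
    (hH : H.Infinite) :
    ∃ H' ⊆ H, H'.Infinite ∧ ∀ i ∈ s, ∃ c, ∀ v : Fin (k i) → ℕ, StrictMono v →
      (∀ j, v j ∈ H') → f i v = c := by
  classical
  induction s using Finset.induction_on with
  | empty => exact ⟨H, subset_rfl, hH, by simp⟩
  | insert i s _ ih =>
    obtain ⟨H₁, hH₁H, hH₁, hs⟩ := ih
    obtain ⟨H₂, hH₂H₁, hH₂, c, hc⟩ := exists_infinite_homogeneous (k i) (f i) hH₁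
    refine ⟨H₂, hH₂H₁.trans hH₁H, hH₂, fun i' hi' => ?_⟩
    rcases Finset.mem_insert.1 hi' with rfl | hi'
    · exact ⟨c, hc⟩
    · obtain ⟨c', hc'⟩ := hs i' hi'
      exact ⟨c', fun v hv hvH => hc' v hv fun j => hH₂H₁ (hvH j)⟩

theorem Finset.exists_strictMonoOn_mem {α : Type*} [LinearOrder α] (Q : Finset α) {H : Set ℕ}
    (hH : H.Infinite) :
    ∃ h : α → ℕ, StrictMonoOn h Q ∧ ∀ q, h q ∈ H := by
  classical
  refine ⟨fun q => Nat.nth (· ∈ H) (Q.filter (· < q)).card, fun q hq q' hq' hqq' => ?_,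
    fun q => Nat.nth_mem_of_infinite hH _⟩
  refine Nat.nth_strictMono hH (Finset.card_lt_card ?_)
  refine (Finset.ssubset_iff_of_subset fun p => ?_).2 ⟨q, ?_, ?_⟩
  · simpa using fun hp hpq => ⟨hp, hpq.trans hqq'⟩
  · simpa using ⟨hq, hqq'⟩
  · simp

theorem exists_strictMonoOn_homogeneous {ι : Type*} (s : Finset ι) {k : ι → ℕ}
    {C : ι → Type*} [∀ i, Finite (C i)] (f : ∀ i, (Fin (k i) → ℕ) → C i) {α : Type*}
    [LinearOrder α] (Q : Finset α) :
    ∃ h : α → ℕ, StrictMonoOn h Q ∧ ∀ i ∈ s, ∀ w w' : Fin (k i) → α, StrictMono w →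
      StrictMono w' → (∀ j, w j ∈ Q) → (∀ j, w' j ∈ Q) → f i (h ∘ w) = f i (h ∘ w') := by
  obtain ⟨H, -, hH, hom⟩ := exists_infinite_homogeneous_finset s f infinite_univ
  obtain ⟨h, hh, hhH⟩ := Q.exists_strictMonoOn_mem hH
  refine ⟨h, hh, fun i hi w w' hw hw' hwQ hw'Q => ?_⟩
  obtain ⟨c, hc⟩ := hom i hi
  rw [hc (h ∘ w) (fun a b hab => hh (hwQ a) (hwQ b) (hw hab)) fun j => hhH _,
    hc (h ∘ w') (fun a b hab => hh (hw'Q a) (hw'Q b) (hw' hab)) fun j => hhH _]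

def falsePositionSum {k : ℕ} (s : Fin k → Bool) : ℕ :=
  ∑ j, if s j then 0 else (j : ℕ)

theorem falsePositionSum_comp_swap_lt {k : ℕ} {s : Fin (k + 2) → Bool} {q : Fin (k + 1)}
    (h₀ : s q.castSucc = true) (h₁ : s q.succ = false) :
    falsePositionSum (s ∘ Equiv.swap q.castSucc q.succ) < falsePositionSum s := by
  set σ := Equiv.swap q.castSucc q.succ
  have hσ : ∑ j, (if s (σ j) then 0 else (j : ℕ)) =
      ∑ j, if s j then 0 else ((σ j : Fin _) : ℕ) := by
    rw [← Equiv.sum_comp σ fun j => if s j then 0 else ((σ j : Fin _) : ℕ)]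
    simp [σ]
  rw [falsePositionSum, falsePositionSum, Function.comp_def, hσ]
  refine Finset.sum_lt_sum (fun j _ => ?_) ⟨q.succ, Finset.mem_univ _, ?_⟩
  · split_ifs with hj
    · rfl
    · rcases eq_or_ne j q.succ with rfl | hj₁
      · simp [σ]
      · rw [Equiv.swap_apply_of_ne_of_ne (by rintro rfl; simp_all) hj₁]
  · simp [σ, h₁]

theorem Fin.bool_induction_swap {P : ∀ {k : ℕ}, (Fin k → Bool) → Prop}
    (mono : ∀ {k} (s : Fin k → Bool), Monotone s → P s)
    (swap : ∀ {k} (s : Fin (k + 2) → Bool) (q : Fin (k + 1)), s q.castSucc = false →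
      s q.succ = true → P s → P (s ∘ Equiv.swap q.castSucc q.succ))
    {k : ℕ} (s : Fin k → Bool) : P s := by
  induction h : falsePositionSum s using Nat.strong_induction_on generalizing k s with
  | _ N ih =>
    by_cases hs : Monotone s
    · exact mono s hs
    rcases k with _ | _ | k
    iterate 2 exact absurd (fun a b _ => (congrArg s (Fin.ext (by omega))).le) hs
    obtain ⟨q, hq₀, hq₁⟩ : ∃ q : Fin (k + 1), s q.castSucc = true ∧ s q.succ = false := by
      simpa [Fin.monotone_iff_le_succ, Bool.lt_iff, and_comm] using hs
    have := swap _ q (by simp [hq₁]) (by simp [hq₀])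
      (ih _ (h ▸ falsePositionSum_comp_swap_lt hq₀ hq₁) _ rfl)
    convert this using 1
    ext j
    simp

theorem Monotone.exists_le_iff_eq_true {k : ℕ} {s : Fin k → Bool} (hs : Monotone s) {v : Fin k → ℕ}
    (hv : StrictMono v) : ∃ c, ∀ j, c ≤ v j ↔ s j = true := by
  classical
  by_cases h : ∃ j, s j = true
  · obtain ⟨j₀, hj₀, hmin⟩ := (Finset.univ.filter (s · = true)).exists_min_image v
      (by simpa [Finset.Nonempty] using h)
    simp only [Finset.mem_filter, Finset.mem_univ, true_and] at hj₀ hmin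
    refine ⟨v j₀, fun j => ⟨fun hj => ?_, hmin j⟩⟩
    exact hs (hv.le_iff_le.1 hj) hj₀
  · push Not at h
    refine ⟨Finset.univ.sup v + 1, fun j => iff_of_false ?_ (by simp [h j])⟩
    exact not_le.2 (Nat.lt_succ_of_le (Finset.le_sup (Finset.mem_univ j)))

theorem Fin.forall_iff_castSucc_succ {k : ℕ} (q : Fin (k + 1)) {P : Fin (k + 2) → Prop} :
    (∀ j, P j) ↔ P q.castSucc ∧ P q.succ ∧ ∀ j, P (q.castSucc.succAbove (q.succAbove j)) := by
  rw [Fin.forall_iff_succAbove q.castSucc, Fin.forall_iff_succAbove q, Fin.succAbove_castSucc_self]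

theorem StrictMono.update_castSucc_update_succ {α : Type*} [Preorder α] {k : ℕ}
    {f : Fin (k + 2) → α} (hf : StrictMono f) (q : Fin (k + 1)) {t t' : α}
    (h₀ : ∀ j < q.castSucc, f j < t) (h₁ : t < t') (h₂ : ∀ j, q.succ < j → t' < f j) :
    StrictMono (update (update f q.castSucc t) q.succ t') := by
  intro a b hab
  simp only [update_apply]
  split_ifs <;> simp only [Fin.ext_iff, Fin.lt_def, Fin.val_succ, Fin.val_castSucc] at * <;>
    first
    | exact absurd hab (by omega)
    | exact h₁
    | exact hf hab
    | exact h₀ _ (by omega)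
    | exact h₂ _ (by omega)
    | exact h₁.trans (h₂ _ (by omega))
    | exact (h₀ _ (by omega)).trans h₁

namespace FirstOrder.Language

variable {L : Language.{u, u}} {α β γ : Type*} {M : Type*} [L.Structure M] {k : ℕ}

namespace Formula

def signed (ψ : L.Formula α) : Bool → L.Formula α
  | true => ψ
  | false => ψ.not

@[simp]
theorem realize_signed {ψ : L.Formula α} {b : Bool} {v : α → M} :
    (ψ.signed b).Realize v ↔ (ψ.Realize v ↔ b = true) := by
  cases b <;> simp [signed]

def patternSet (φ : L.Formula (α ⊕ β)) (c : Fin k → β → M) (s : Fin k → Bool) : Set (α → M) :=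
  {x | ∀ j, φ.Realize (Sum.elim x (c j)) ↔ s j = true}

def RealizesPattern (φ : L.Formula (α ⊕ β)) (c : Fin k → β → M) (s : Fin k → Bool) : Prop :=
  (φ.patternSet c s).Nonempty

noncomputable def patternFormula (φ : L.Formula (α ⊕ β)) (s : Fin k → Bool) :
    L.Formula (α ⊕ Fin k × β) :=
  iInf fun j => (φ.relabel (Sum.map id (Prod.mk j))).signed (s j)

@[simp]
theorem realize_patternFormula {φ : L.Formula (α ⊕ β)} {s : Fin k → Bool} {x : α → M}
    {c : Fin k × β → M} :
    (φ.patternFormula s).Realize (Sum.elim x c) ↔ x ∈ φ.patternSet (fun j y => c (j, y)) s := by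
  simp only [patternFormula, realize_iInf, realize_signed, realize_relabel, Sum.elim_comp_map,
    Function.comp_id]
  rfl

noncomputable def existsPatternFormula [Finite α] (φ : L.Formula (α ⊕ β)) (s : Fin k → Bool)
    (g : Fin k × β → γ) : L.Formula γ :=
  ((φ.patternFormula s).relabel (Sum.elim Sum.inr (Sum.inl ∘ g))).iExs α

@[simp]
theorem realize_existsPatternFormula [Finite α] {φ : L.Formula (α ⊕ β)} {s : Fin k → Bool}
    {g : Fin k × β → γ} {v : γ → M} :
    (φ.existsPatternFormula s g).Realize v ↔ φ.RealizesPattern (fun j y => v (g (j, y))) s := by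
  simp only [existsPatternFormula, realize_iExs, realize_relabel, RealizesPattern]
  refine exists_congr fun x => ?_
  have : Sum.elim v x ∘ Sum.elim Sum.inr (Sum.inl ∘ g) = Sum.elim x (v ∘ g) := by
    ext (_ | _) <;> rfl
  rw [this, realize_patternFormula]
  rfl

def IsPatternIndiscernible {ι : Type*} [Preorder ι] (φ : L.Formula (α ⊕ β)) (b : ι → β → M) :
    Prop :=
  ∀ k (s : Fin k → Bool) (w w' : Fin k → ι), StrictMono w → StrictMono w' →
    φ.RealizesPattern (b ∘ w) s → φ.RealizesPattern (b ∘ w') s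

theorem realizesPattern_of_monotone {φ : L.Formula (α ⊕ β)} {a : ℕ → α → M} {b : ℕ → β → M}
    (hab : ∀ i j, φ.Realize (Sum.elim (a i) (b j)) ↔ i ≤ j) {s : Fin k → Bool} (hs : Monotone s)
    {v : Fin k → ℕ} (hv : StrictMono v) : φ.RealizesPattern (b ∘ v) s := by
  obtain ⟨c, hc⟩ := hs.exists_le_iff_eq_true hv
  exact ⟨a c, fun j => (hab c (v j)).trans (hc j)⟩

theorem IsPatternIndiscernible.ssubset_of_not_realizesPattern_swap {φ : L.Formula (α ⊕ β)}
    {b : ℚ → β → M} (hb : φ.IsPatternIndiscernible b) {s : Fin (k + 2) → Bool} {q : Fin (k + 1)}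
    (hs₀ : s q.castSucc = false) (hs₁ : s q.succ = true)
    (hs : φ.RealizesPattern (fun j : Fin (k + 2) => b j) s)
    (hs' : ¬ φ.RealizesPattern (fun j : Fin (k + 2) => b j) (s ∘ Equiv.swap q.castSucc q.succ))
    {t t' : ℚ} (ht : (q : ℚ) - 1 < t) (htt' : t < t') (ht' : t' < q + 2) :
    let E := φ.patternSet (fun j => b (q.castSucc.succAbove (q.succAbove j)))
      (fun j => s (q.castSucc.succAbove (q.succAbove j)))
    E ∩ {x | φ.Realize (Sum.elim x (b t))} ⊂ E ∩ {x | φ.Realize (Sum.elim x (b t'))} := by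
  let e (j : Fin k) : Fin (k + 2) := q.castSucc.succAbove (q.succAbove j)
  have he₀ (j : Fin k) : e j ≠ q.castSucc := Fin.succAbove_ne _ _
  have he₁ (j : Fin k) : e j ≠ q.succ := by
    rw [← Fin.succAbove_castSucc_self]
    exact Fin.succAbove_right_injective.ne (Fin.succAbove_ne _ _)
  have hcanon : StrictMono fun j : Fin (k + 2) => (j : ℚ) :=
    Nat.strictMono_cast.comp Fin.val_strictMono
  set W := update (update (fun j : Fin (k + 2) => (j : ℚ)) q.castSucc t) q.succ t'
  have hW : StrictMono W := by
    refine hcanon.update_castSucc_update_succ q (fun j hj => ?_) htt' fun j hj => ?_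
    · have : ((j : ℕ) : ℚ) + 1 ≤ q := by exact_mod_cast (hj : (j : ℕ) + 1 ≤ q)
      linarith
    · have : (q : ℚ) + 2 ≤ ((j : ℕ) : ℚ) := by exact_mod_cast (hj : (q : ℕ) + 2 ≤ j)
      linarith
  have hsplit (p : Fin (k + 2) → Bool) (x : α → M) :
      (∀ j, φ.Realize (Sum.elim x (b (W j))) ↔ p j = true) ↔
        (φ.Realize (Sum.elim x (b t)) ↔ p q.castSucc = true) ∧
          (φ.Realize (Sum.elim x (b t')) ↔ p q.succ = true) ∧
            ∀ j, φ.Realize (Sum.elim x (b (e j))) ↔ p (e j) = true := by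
    rw [Fin.forall_iff_castSucc_succ q]
    simp [W, e, he₀, he₁, Fin.castSucc_lt_succ.ne]
  refine (ssubset_iff_of_subset ?_).2 ?_
  · rintro x ⟨hxE, hx⟩
    refine ⟨hxE, ?_⟩
    by_contra hx'
    refine hs' (hb _ _ W _ hW hcanon ⟨x, (hsplit _ x).2 ⟨?_, ?_, fun j => ?_⟩⟩)
    · simpa [hs₁] using hx
    · simpa [hs₀] using hx'
    · simpa [Equiv.swap_apply_of_ne_of_ne (he₀ j) (he₁ j)] using hxE j
  · obtain ⟨x, hx⟩ := hb _ s _ W hcanon hW hs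
    obtain ⟨hx₀, hx₁, hxE⟩ := (hsplit _ x).1 hx
    rw [hs₀] at hx₀
    rw [hs₁] at hx₁
    exact ⟨x, ⟨hxE, hx₁.2 rfl⟩, fun h => absurd (hx₀.1 h.2) (by simp)⟩

end Formula

namespace Theory

variable {T : L.Theory}

theorem exists_modelType_realize_of_finset {α : Type v} {ι : Type*} (F : ι → L.Formula α)
    (M : T.ModelType.{u, u, w}) (h : ∀ s : Finset ι, ∃ x : α → M, ∀ i ∈ s, (F i).Realize x) :
    ∃ (N : T.ModelType.{u, u, max u v}) (x : α → N), ∀ i, (F i).Realize x := by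
  classical
  let T' : Option ι → L[[α]].Theory := fun o =>
    o.elim ((L.lhomWithConstants α).onTheory T) fun i => {Formula.equivSentence (F i)}
  have hsat : IsSatisfiable (⋃ o, T' o) := by
    refine (isSatisfiable_iUnion_iff_isSatisfiable_iUnion_finset T').2 fun s => ?_
    obtain ⟨x, hx⟩ := h s.eraseNone
    let _ := constantsOn.structure x
    have : M ⊨ ⋃ o ∈ s, T' o := (model_iff _).2 fun φ hφ => by
      obtain ⟨o, ho, hφ⟩ := mem_iUnion₂.1 hφ
      cases o with
      | none =>
        obtain ⟨ψ, hψ, rfl⟩ := hφ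
        exact (LHom.realize_onSentence M _ ψ).2 (M.is_model.realize_of_mem ψ hψ)
      | some i =>
        rw [mem_singleton_iff.1 hφ, Formula.realize_equivSentence]
        exact hx i (Finset.mem_eraseNone.2 ho)
    exact Model.isSatisfiable M
  obtain ⟨N⟩ := hsat
  refine ⟨(N.subtheoryModel (subset_iUnion T' none)).reduct (L.lhomWithConstants α),
    fun a => (L.con a : N), fun i => ?_⟩
  have := N.is_model.realize_of_mem _ (mem_iUnion.2 ⟨some i, rfl⟩)
  exact (@Formula.realize_equivSentence _ N ((L.lhomWithConstants α).reduct N) _ _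
    (LHom.isExpansionOn_reduct _ _) _).1 this

variable {n m : ℕ}

theorem exists_isPatternIndiscernible_of_order (φ : L.Formula (Fin n ⊕ Fin m))
    (M : T.ModelType.{u, u, u}) (a : ℕ → Fin n → M) (b : ℕ → Fin m → M)
    (hab : ∀ i j, φ.Realize (Sum.elim (a i) (b j)) ↔ i < j) :
    ∃ (N : T.ModelType.{u, u, u}) (c : ℚ → Fin m → N), φ.IsPatternIndiscernible c ∧
      ∀ k (s : Fin k → Bool), Monotone s → φ.RealizesPattern (fun j : Fin k => c j) s := by
  classical
  -- after the shift every monotone pattern, including the constant `true` one, has a realizer `a c`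
  have hab' (i j : ℕ) : φ.Realize (Sum.elim (a i) (b (j + 1))) ↔ i ≤ j :=
    (hab i _).trans Nat.lt_succ_iff
  have canon_mono (k : ℕ) : StrictMono fun j : Fin k => (j : ℚ) :=
    Nat.strictMono_cast.comp Fin.val_strictMono
  let ι := Σ k, (Fin k → Bool) × {w : Fin k → ℚ // StrictMono w}
  let pat (i : ι) (w : Fin i.1 → ℚ) : L.Formula (ℚ × Fin m) :=
    φ.existsPatternFormula i.2.1 (Prod.map w id)
  let F (i : ι) : L.Formula (ℚ × Fin m) :=
    if Monotone i.2.1 then pat i i.2.2 else (pat i i.2.2).iff (pat i fun j => (j : ℚ))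
  obtain ⟨N, c, hc⟩ := exists_modelType_realize_of_finset F M fun s₀ => by
    let Q : Finset ℚ := s₀.biUnion fun i =>
      Finset.univ.image i.2.2.1 ∪ Finset.univ.image fun j : Fin i.1 => (j : ℚ)
    obtain ⟨h, hh, hom⟩ := exists_strictMonoOn_homogeneous s₀
      (fun i v => φ.RealizesPattern (fun j => b (v j + 1)) i.2.1) Q
    refine ⟨fun p => b (h p.1 + 1) p.2, fun i hi => ?_⟩
    have hQ (j) : i.2.2.1 j ∈ Q := Finset.mem_biUnion.2 ⟨i, hi, by simp⟩
    have hQ' (j : Fin i.1) : (j : ℚ) ∈ Q := Finset.mem_biUnion.2 ⟨i, hi, by simp⟩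
    simp only [F, pat]
    split_ifs with hs
    · rw [Formula.realize_existsPatternFormula]
      exact Formula.realizesPattern_of_monotone hab' hs fun x y hxy =>
        hh (hQ x) (hQ y) (i.2.2.2 hxy)
    · rw [Formula.realize_iff, Formula.realize_existsPatternFormula,
        Formula.realize_existsPatternFormula]
      exact iff_of_eq (hom i hi _ _ i.2.2.2 (canon_mono _) hQ hQ')
  let c' : ℚ → Fin m → N := fun q y => c (q, y)
  have hF (k : ℕ) (s : Fin k → Bool) (w : Fin k → ℚ) (hw : StrictMono w) :
      if Monotone s then φ.RealizesPattern (c' ∘ w) s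
      else (φ.RealizesPattern (c' ∘ w) s ↔ φ.RealizesPattern (fun j : Fin k => c' j) s) := by
    have := hc ⟨k, s, w, hw⟩
    simp only [F, pat] at this
    split_ifs at this ⊢
    · rwa [Formula.realize_existsPatternFormula] at this
    · rwa [Formula.realize_iff, Formula.realize_existsPatternFormula,
        Formula.realize_existsPatternFormula] at this
  refine ⟨N, c', fun k s w w' hw hw' hs => ?_, fun k s hs => ?_⟩
  · have hw := hF k s w hw
    have hw' := hF k s w' hw'
    split_ifs at hw hw'
    · exact hw'
    · exact hw'.2 (hw.1 hs)
  · have := hF k s _ (canon_mono k)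
    rwa [if_pos hs] at this

theorem hasIndependenceProperty_of_forall_realizesPattern (φ : L.Formula (Fin n ⊕ Fin m))
    (M : T.ModelType.{u, u, u}) (b : ℕ → Fin m → M)
    (h : ∀ k (s : Fin k → Bool), φ.RealizesPattern (fun j : Fin k => b j) s) :
    T.HasIndependenceProperty := by
  classical
  let g (i : ℕ) (S : Set ℕ) : Fin n ⊕ Fin m → (ℕ × Fin m) ⊕ (Set ℕ × Fin n) :=
    Sum.elim (fun x => Sum.inr (S, x)) fun y => Sum.inl (i, y)
  let F (iS : ℕ × Set ℕ) := (φ.relabel (g iS.1 iS.2)).signed (decide (iS.1 ∈ iS.2))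
  obtain ⟨N, v, hv⟩ := exists_modelType_realize_of_finset F M fun s₀ => by
    let K := s₀.sup Prod.fst + 1
    choose x hx using fun S : Set ℕ => h K fun j => decide ((j : ℕ) ∈ S)
    refine ⟨Sum.elim (fun p => b p.1 p.2) fun p => x p.1 p.2, fun iS hiS => ?_⟩
    have hi : iS.1 < K := Nat.lt_succ_of_le (Finset.le_sup (f := Prod.fst) hiS)
    have : Sum.elim (fun p => b p.1 p.2) (fun p => x p.1 p.2) ∘ g iS.1 iS.2 =
        Sum.elim (x iS.2) (b iS.1) := by
      ext (_ | _) <;> rfl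
    simpa [F, this] using hx iS.2 ⟨iS.1, hi⟩
  refine ⟨m, n, φ.relabel Sum.swap, N, fun i y => v (Sum.inl (i, y)),
    fun S => ⟨fun x => v (Sum.inr (S, x)), fun i => ?_⟩⟩
  have : v ∘ g i S = Sum.elim (fun x => v (Sum.inr (S, x))) fun y => v (Sum.inl (i, y)) := by
    ext (_ | _) <;> rfl
  simpa [F, this, Formula.realize_relabel] using hv (i, S)

theorem hasStrictOrderProperty_of_ssubset {β : Type*} [Finite β] (χ : L.Formula (Fin n ⊕ β))
    (M : T.ModelType.{u, u, u}) (b : ℕ → β → M)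
    (h : ∀ i j, i < j → {x | χ.Realize (Sum.elim x (b i))} ⊂ {x | χ.Realize (Sum.elim x (b j))}) :
    T.HasStrictOrderProperty := by
  obtain ⟨m, ⟨e⟩⟩ := Finite.exists_equiv_fin β
  refine ⟨n, m, χ.relabel (Sum.map id e), M, fun i => b i ∘ e.symm, fun i j hij => ?_⟩
  have (i : ℕ) (x : Fin n → M) : Sum.elim x (b i ∘ e.symm) ∘ Sum.map id e = Sum.elim x (b i) := by
    ext (_ | _) <;> simp
  simpa only [Formula.realize_relabel, this] using h i j hij

theorem hasStrictOrderProperty_of_not_realizesPattern_swap (φ : L.Formula (Fin n ⊕ Fin m))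
    (N : T.ModelType.{u, u, u}) (b : ℚ → Fin m → N) (hb : φ.IsPatternIndiscernible b) {k : ℕ}
    {s : Fin (k + 2) → Bool} {q : Fin (k + 1)} (hs₀ : s q.castSucc = false)
    (hs₁ : s q.succ = true) (hs : φ.RealizesPattern (fun j : Fin (k + 2) => b j) s)
    (hs' : ¬ φ.RealizesPattern (fun j : Fin (k + 2) => b j) (s ∘ Equiv.swap q.castSucc q.succ)) :
    T.HasStrictOrderProperty := by
  let e (j : Fin k) : Fin (k + 2) := q.castSucc.succAbove (q.succAbove j)
  let u (i : ℕ) : ℚ := q - 1 / (i + 2)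
  have hu_mono : StrictMono u := fun i i' hii' => by
    have : (i : ℚ) < i' := by exact_mod_cast hii'
    simp only [u]
    gcongr
  have hu (i : ℕ) : (q : ℚ) - 1 < u i ∧ u i < q + 2 := by
    have h₀ : 0 < 1 / ((i : ℚ) + 2) := by positivity
    have h₁ : 1 / ((i : ℚ) + 2) < 1 :=
      (div_lt_one (by positivity)).2 (by linarith [i.cast_nonneg (α := ℚ)])
    constructor <;> linarith
  let χ : L.Formula (Fin n ⊕ ((Fin k × Fin m) ⊕ Fin m)) :=
    (φ.patternFormula (s ∘ e)).relabel (Sum.map id Sum.inl) ⊓ φ.relabel (Sum.map id Sum.inr)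
  refine hasStrictOrderProperty_of_ssubset χ N
    (fun i => Sum.elim (fun p => b (e p.1) p.2) (b (u i))) fun i i' hii' => ?_
  simp only [χ, Formula.realize_inf, Formula.realize_relabel, Sum.elim_comp_map, Function.comp_id,
    Formula.realize_patternFormula]
  exact hb.ssubset_of_not_realizesPattern_swap hs₀ hs₁ hs hs' (hu i).1 (hu_mono hii') (hu i').2

theorem HasIndependenceProperty.hasOrderProperty (h : T.HasIndependenceProperty) :
    T.HasOrderProperty := by
  obtain ⟨n, m, ψ, M, a, hS⟩ := h
  choose b hb using hS
  exact ⟨n, m, ψ, M, a, fun j => b (Iio j), fun i j => hb (Iio j) i⟩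

theorem HasStrictOrderProperty.hasOrderProperty (h : T.HasStrictOrderProperty) :
    T.HasOrderProperty := by
  obtain ⟨n, m, χ, M, b, hb⟩ := h
  have hmono : Monotone fun i => {x : Fin n → M | χ.Realize (Sum.elim x (b i))} :=
    monotone_nat_of_le_succ fun i => (hb i (i + 1) i.lt_succ_self).subset
  choose a ha using fun i => exists_of_ssubset (hb i (i + 1) i.lt_succ_self)
  refine ⟨n, m, χ, M, a, b, fun i j => ⟨fun hij => ?_, fun hij => hmono hij (ha i).1⟩⟩
  by_contra! hji
  exact (ha i).2 (hmono hji hij)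

end Theory

end FirstOrder.Language

theorem unstable_iff_independence_or_strictOrder_general {L : FirstOrder.Language.{u, u}}
    (T : L.Theory) :
    T.HasOrderProperty ↔ T.HasIndependenceProperty ∨ T.HasStrictOrderProperty := by
  open FirstOrder.Language.Theory in
  refine ⟨fun ⟨n, m, φ, M, a, b, hab⟩ => ?_,
    fun h => h.elim (·.hasOrderProperty) (·.hasOrderProperty)⟩
  obtain ⟨N, c, hc, hmono⟩ := exists_isPatternIndiscernible_of_order φ M a b hab
  let P {k : ℕ} (s : Fin k → Bool) : Prop := φ.RealizesPattern (fun j : Fin k => c j) s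
  by_cases hswap : ∃ (k : ℕ) (s : Fin (k + 2) → Bool) (q : Fin (k + 1)), s q.castSucc = false ∧
      s q.succ = true ∧ P s ∧ ¬ P (s ∘ Equiv.swap q.castSucc q.succ)
  · obtain ⟨k, s, q, hs₀, hs₁, hs, hs'⟩ := hswap
    exact .inr (hasStrictOrderProperty_of_not_realizesPattern_swap φ N c hc hs₀ hs₁ hs hs')
  · refine .inl (hasIndependenceProperty_of_forall_realizesPattern φ N (fun i => c i) fun k s => ?_)
    refine Fin.bool_induction_swap (P := P) (hmono _) (fun s q hs₀ hs₁ hs => ?_) s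
    by_contra hs'
    exact hswap ⟨_, s, q, hs₀, hs₁, hs, hs'⟩

/-- A complete theory is unstable (some formula has the order property) if and only if some
formula has the independence property or some formula has the strict order property. -/
theorem unstable_iff_independence_or_strictOrder {L : FirstOrder.Language.{u, u}}
    (T : L.Theory) (hT : T.IsComplete) :
    T.HasOrderProperty ↔ T.HasIndependenceProperty ∨ T.HasStrictOrderProperty :=
  unstable_iff_independence_or_strictOrder_general T
end
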